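/- arXiv:1805.00492 — 6 statements merged into one kernel-verified Lean document; each statement's English description precedes it below -/
import Mathlib

section
/- For all v, w ∈ ℝ^d, the set H = {f ∈ L : f·A_v ⊆ A_w} is an R-submodule of L, H equals the k-linear span of the monomials x^m with m ∈ ℤ^d and m + ((C+v) ∩ ℤ^d) ⊆ C + w, and the map from H to Hom_R(A_v, A_w) sending f to the restriction to A_v of multiplication by f is an isomorphism of R-modules. In particular, every R-linear map A_v → A_w is multiplication by a unique element of this span. -/
open Set

set_option synthInstance.maxHeartbeats 400000
set_option maxHeartbeats 1000000

noncomputable section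

/-- The embedding of the lattice `ℤ^d` into `ℝ^d`. -/
def ιZ (d : ℕ) (m : Fin d → ℤ) : Fin d → ℝ := fun j => (m j : ℝ)

/-- The lattice points of the translated cone `C + v`, where
`C = {x | ∀ i, 0 ≤ n i x}`. -/
def latticePts {d t : ℕ} (n : Fin t → ((Fin d → ℝ) →ₗ[ℝ] ℝ)) (v : Fin d → ℝ) :
    Set (Fin d → ℤ) :=
  {m | ∀ i, 0 ≤ n i (ιZ d m - v)}

/-- The toric algebra `R = k[C ∩ ℤ^d]`: the `k`-subalgebra of the Laurent
polynomial algebra `L = AddMonoidAlgebra k (Fin d → ℤ)` spanned (equivalently,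
generated, since the monomial set is closed under multiplication and contains `1`)
by the monomials `x^m` with `m ∈ C ∩ ℤ^d`. -/
def toricR (k : Type) [Field k] (d t : ℕ) (n : Fin t → ((Fin d → ℝ) →ₗ[ℝ] ℝ)) :
    Subalgebra k (AddMonoidAlgebra k (Fin d → ℤ)) :=
  Algebra.adjoin k
    {f | ∃ m : Fin d → ℤ, (∀ i, 0 ≤ n i (ιZ d m)) ∧ f = AddMonoidAlgebra.single m 1}

/-- The conic module `A_v`: the `R`-submodule of `L` spanned by the monomials `x^m`
with `m ∈ (C + v) ∩ ℤ^d`. -/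
def conicA (k : Type) [Field k] (d t : ℕ) (n : Fin t → ((Fin d → ℝ) →ₗ[ℝ] ℝ))
    (v : Fin d → ℝ) :
    Submodule ↥(toricR k d t n) (AddMonoidAlgebra k (Fin d → ℤ)) :=
  Submodule.span ↥(toricR k d t n)
    {f | ∃ m : Fin d → ℤ, (∀ i, 0 ≤ n i (ιZ d m - v)) ∧ f = AddMonoidAlgebra.single m 1}

/-!
Everything is graded by `ℤ^d`: `R`, `A_v` and `H = A_w / A_v` are spanned by the monomials they
contain, so membership is a condition on supports, and this identifies `H` with the span of the
monomials `x^m` with `m + ((C + v) ∩ ℤ^d) ⊆ C + w`. Multiplication `H → Hom_R(A_v, A_w)` is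
injective because `A_v` contains a monomial `x^p`, a nonzerodivisor of `L`. For surjectivity put
`f = φ(x^p) x^(-p)`. Since `C` has an interior point, its lattice points lie arbitrarily deep in
`C`, so `q - p = u - s` with `u, s ∈ C ∩ ℤ^d`; for `x^q ∈ A_v` the identity `x^s • x^q = x^u • x^p`
in `A_v` and `R`-linearity of `φ` give `φ(x^q) = x^(q-p) φ(x^p) = f x^q`.
-/

open AddMonoidAlgebra Filter
open scoped Pointwise

namespace AddMonoidAlgebra

variable {k M : Type*} [CommSemiring k]

theorem setOf_exists_and_eq_single (P : M → Prop) :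
    {f : AddMonoidAlgebra k M | ∃ m, P m ∧ f = single m 1} = (single · 1) '' {m | P m} := by
  ext f
  simp [eq_comm]

theorem mul_mem_supported_add [Add M] {s t : Set M} {x y : AddMonoidAlgebra k M}
    (hx : x ∈ supported k k s) (hy : y ∈ supported k k t) : x * y ∈ supported k k (s + t) := by
  classical
  intro m hm
  obtain ⟨a, ha, b, hb, rfl⟩ := Finset.mem_add.1 (support_coeff_mul_subset x y hm)
  exact Set.add_mem_add (hx ha) (hy hb)

theorem mem_supported_of_mem_adjoin [AddMonoid M] {S : AddSubmonoid M}
    {f : AddMonoidAlgebra k M} (hf : f ∈ Algebra.adjoin k ((single · (1 : k)) '' (S : Set M))) :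
    f ∈ supported k k (S : Set M) := by
  induction hf using Algebra.adjoin_induction with
  | mem x hx =>
    obtain ⟨m, hm, rfl⟩ := hx
    exact Finsupp.single_mem_supported k 1 hm
  | algebraMap r => exact Finsupp.single_mem_supported k r S.zero_mem
  | add x y _ _ hx hy => exact add_mem hx hy
  | mul x y _ _ hx hy =>
    exact supported_mono (AddSubmonoid.add_subset subset_rfl subset_rfl)
      (mul_mem_supported_add hx hy)

theorem mem_span_image_single_iff [AddMonoid M] {R : Subalgebra k (AddMonoidAlgebra k M)}
    {S T : Set M} (hR : ∀ r ∈ R, r ∈ supported k k S) (hST : S + T ⊆ T)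
    {f : AddMonoidAlgebra k M} :
    f ∈ Submodule.span R ((single · (1 : k)) '' T) ↔ f ∈ supported k k T := by
  refine ⟨fun hf => ?_, fun hf => ?_⟩
  · induction hf using Submodule.span_induction with
    | mem x hx =>
      obtain ⟨m, hm, rfl⟩ := hx
      exact Finsupp.single_mem_supported k 1 hm
    | zero => exact zero_mem _
    | add x y _ _ hx hy => exact add_mem hx hy
    | smul r x _ hx => exact supported_mono hST (mul_mem_supported_add (hR r r.2) hx)
  · rw [supported_eq_span_single] at hf
    exact Submodule.span_le_restrictScalars k R _ hf

theorem mul_single_one_mem_supported_iff [AddMonoid M] [IsRightCancelAdd M] {T : Set M}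
    {f : AddMonoidAlgebra k M} {q : M} :
    f * single q 1 ∈ supported k k T ↔ ∀ m ∈ f.coeff.support, m + q ∈ T := by
  rw [mem_supported, support_coeff_mul_single f 1 (by simp) q, Finset.coe_map,
    Set.image_subset_iff]
  rfl

end AddMonoidAlgebra

namespace Submodule

variable {R A : Type*} [CommSemiring R] [CommSemiring A] [Algebra R A]

theorem mem_div_span_iff {I : Submodule R A} {s : Set A} {x : A} :
    x ∈ I / span R s ↔ ∀ y ∈ s, x * y ∈ I := by
  rw [← span_singleton_le_iff_mem, le_div_iff_mul_le, span_mul_span, span_le,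
    Set.singleton_mul, Set.image_subset_iff]
  rfl

def divToLinearMap (I J : Submodule R A) : ↥(I / J) →ₗ[R] ↥J →ₗ[R] ↥I :=
  LinearMap.mk₂ R (fun f a => ⟨f * a, mem_div_iff_forall_mul_mem.1 f.2 a a.2⟩)
    (fun _ _ _ => Subtype.ext (add_mul ..)) (fun _ _ _ => Subtype.ext (smul_mul_assoc ..))
    (fun _ _ _ => Subtype.ext (mul_add ..)) (fun _ _ _ => Subtype.ext (mul_smul_comm ..))

theorem divToLinearMap_injective {I J : Submodule R A} {a : A} (haJ : a ∈ J)
    (ha : IsRightRegular a) : Function.Injective (divToLinearMap I J) :=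
  fun _ _ hfg => Subtype.ext (ha (congrArg Subtype.val (LinearMap.congr_fun hfg ⟨a, haJ⟩)))

end Submodule

theorem exists_forall_pos_of_interior_nonempty {E ι : Type*} [NormedAddCommGroup E]
    [NormedSpace ℝ E] [FiniteDimensional ℝ E] {g : ι → E →ₗ[ℝ] ℝ} (hg : ∀ i, g i ≠ 0)
    (h : (interior {x | ∀ i, 0 ≤ g i x}).Nonempty) : ∃ x, ∀ i, 0 < g i x := by
  obtain ⟨x, hx⟩ := h
  refine ⟨x, fun i => ?_⟩
  have hxi : x ∈ interior (g i ⁻¹' Ici 0) := interior_mono (fun y (hy : ∀ i, 0 ≤ g i y) => hy i) hx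
  rwa [← ((g i).isOpenMap_of_finiteDimensional (LinearMap.surjective_of_ne_zero (hg i))
    ).preimage_interior_eq_interior_preimage (g i).continuous_of_finiteDimensional,
    interior_Ici] at hxi

/-- Round `N • x` to a lattice point, for `N` large. -/
theorem exists_forall_le_apply_ιZ {d : ℕ} {ι : Type*} [Finite ι]
    {g : ι → (Fin d → ℝ) →ₗ[ℝ] ℝ} {x : Fin d → ℝ} (hx : ∀ i, 0 < g i x) (B : ι → ℝ) :
    ∃ u : Fin d → ℤ, ∀ i, B i ≤ g i (ιZ d u) := by
  obtain ⟨N, hN⟩ := (eventually_all.2 fun i =>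
    (tendsto_natCast_atTop_atTop.atTop_mul_const (hx i)).eventually_ge_atTop
      (B i + ‖LinearMap.toContinuousLinearMap (g i)‖)).exists
  refine ⟨fun j => ⌊(N : ℝ) * x j⌋, fun i => ?_⟩
  set y := ιZ d (fun j => ⌊(N : ℝ) * x j⌋) - (N : ℝ) • x
  have hy : ‖y‖ ≤ 1 := (pi_norm_le_iff_of_nonneg zero_le_one).2 fun j => by
    rw [Real.norm_eq_abs, abs_le]
    simp only [y, ιZ, Pi.sub_apply, Pi.smul_apply, smul_eq_mul]
    constructor <;> linarith [Int.floor_le ((N : ℝ) * x j), Int.lt_floor_add_one ((N : ℝ) * x j)]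
  have hgy : ‖g i y‖ ≤ ‖LinearMap.toContinuousLinearMap (g i)‖ :=
    ((LinearMap.toContinuousLinearMap (g i)).le_opNorm y).trans
      (mul_le_of_le_one_right (norm_nonneg _) hy)
  have hsplit : ιZ d (fun j => ⌊(N : ℝ) * x j⌋) = (N : ℝ) • x + y := (add_sub_cancel _ _).symm
  rw [hsplit, map_add, map_smul, smul_eq_mul]
  linarith [hN i, neg_abs_le (g i y), Real.norm_eq_abs (g i y)]

theorem ιZ_eq_compLeft (d : ℕ) : ιZ d = (Int.castAddHom ℝ).compLeft (Fin d) :=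
  rfl

section Toric

variable {k : Type} [Field k] {d t : ℕ} (n : Fin t → ((Fin d → ℝ) →ₗ[ℝ] ℝ))

def coneLattice : AddSubmonoid (Fin d → ℤ) where
  carrier := {m | ∀ i, 0 ≤ n i (ιZ d m)}
  add_mem' := by
    intro a b ha hb i
    rw [ιZ_eq_compLeft, map_add, map_add]
    exact add_nonneg (ha i) (hb i)
  zero_mem' i := by rw [ιZ_eq_compLeft, map_zero, map_zero]

theorem toricR_eq_adjoin :
    toricR k d t n = Algebra.adjoin k ((single · (1 : k)) '' (coneLattice n : Set _)) := by
  rw [toricR, setOf_exists_and_eq_single]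
  rfl

theorem single_mem_toricR {m : Fin d → ℤ} (hm : m ∈ coneLattice n) :
    single m (1 : k) ∈ toricR k d t n :=
  Algebra.subset_adjoin ⟨m, hm, rfl⟩

theorem coneLattice_add_latticePts_subset (v : Fin d → ℝ) :
    (coneLattice n : Set (Fin d → ℤ)) + latticePts n v ⊆ latticePts n v := by
  rintro _ ⟨a, ha, b, hb, rfl⟩ i
  rw [ιZ_eq_compLeft, map_add, add_sub_assoc, map_add]
  exact add_nonneg (ha i) (hb i)

theorem conicA_eq_span (v : Fin d → ℝ) :
    conicA k d t n v = Submodule.span (toricR k d t n) ((single · 1) '' latticePts n v) := by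
  rw [conicA, setOf_exists_and_eq_single]
  rfl

theorem mem_conicA_iff {v : Fin d → ℝ} {f : AddMonoidAlgebra k (Fin d → ℤ)} :
    f ∈ conicA k d t n v ↔ f ∈ supported k k (latticePts n v) := by
  rw [conicA_eq_span]
  exact mem_span_image_single_iff (fun r hr => mem_supported_of_mem_adjoin
    (toricR_eq_adjoin (k := k) n ▸ hr)) (coneLattice_add_latticePts_subset n v)

theorem single_mem_conicA {v : Fin d → ℝ} {q : Fin d → ℤ} (hq : q ∈ latticePts n v) :
    single q (1 : k) ∈ conicA k d t n v :=
  Submodule.subset_span ⟨q, hq, rfl⟩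

theorem mem_div_conicA_iff {v w : Fin d → ℝ} {f : AddMonoidAlgebra k (Fin d → ℤ)} :
    f ∈ conicA k d t n w / conicA k d t n v ↔
      f ∈ supported k k {m | (fun m' => m + m') '' latticePts n v ⊆ latticePts n w} := by
  rw [conicA_eq_span n v, Submodule.mem_div_span_iff, mem_supported]
  simp only [Set.forall_mem_image, mem_conicA_iff, mul_single_one_mem_supported_iff,
    Set.subset_def, Set.mem_ofPred_eq, Finset.mem_coe]
  exact ⟨fun h m hm q hq => h hq m hm, fun h q hq m hm => h m hm hq⟩

theorem div_conicA_eq_span (v w : Fin d → ℝ) :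
    conicA k d t n w / conicA k d t n v = Submodule.span (toricR k d t n)
      {f | ∃ m : Fin d → ℤ,
        ((fun m' => m + m') '' latticePts n v ⊆ latticePts n w) ∧
        f = AddMonoidAlgebra.single m 1} := by
  ext f
  rw [mem_div_conicA_iff, setOf_exists_and_eq_single, mem_span_image_single_iff
    (fun r hr => mem_supported_of_mem_adjoin (toricR_eq_adjoin (k := k) n ▸ hr))]
  rintro _ ⟨s, hs, m, hm, rfl⟩ _ ⟨q, hq, rfl⟩
  show s + m + q ∈ _
  rw [add_assoc]
  exact coneLattice_add_latticePts_subset n w ⟨s, hs, _, hm ⟨q, hq, rfl⟩, rfl⟩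

variable {n} {x₀ : Fin d → ℝ} (hx₀ : ∀ i, 0 < n i x₀)
include hx₀

theorem latticePts_nonempty (v : Fin d → ℝ) : (latticePts n v).Nonempty := by
  obtain ⟨u, hu⟩ := exists_forall_le_apply_ιZ hx₀ (fun i => n i v)
  exact ⟨u, fun i => by simpa [map_sub] using hu i⟩

theorem exists_eq_sub_of_mem_coneLattice (z : Fin d → ℤ) :
    ∃ u ∈ coneLattice n, ∃ s ∈ coneLattice n, z = u - s := by
  obtain ⟨u, hu⟩ := exists_forall_le_apply_ιZ hx₀ (fun i => max 0 (n i (ιZ d z)))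
  refine ⟨u, fun i => (le_max_left _ _).trans (hu i), u - z, fun i => ?_, by abel⟩
  rw [ιZ_eq_compLeft, map_sub, map_sub, sub_nonneg]
  exact (le_max_right _ _).trans (hu i)

theorem coe_apply_single_eq_single_mul {v w : Fin d → ℝ}
    (φ : ↥(conicA k d t n v) →ₗ[↥(toricR k d t n)] ↥(conicA k d t n w))
    {p q : Fin d → ℤ} (hp : p ∈ latticePts n v) (hq : q ∈ latticePts n v) :
    (φ ⟨single q 1, single_mem_conicA n hq⟩ : AddMonoidAlgebra k (Fin d → ℤ)) =
      single (q - p) (1 : k) *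
        (φ ⟨single p 1, single_mem_conicA n hp⟩ : AddMonoidAlgebra k (Fin d → ℤ)) := by
  obtain ⟨u, hu, s, hs, hus⟩ := exists_eq_sub_of_mem_coneLattice hx₀ (q - p)
  have hsmul : (⟨single s 1, single_mem_toricR n hs⟩ : toricR k d t n) •
      (⟨single q 1, single_mem_conicA n hq⟩ : conicA k d t n v) =
      (⟨single u 1, single_mem_toricR n hu⟩ : toricR k d t n) •
      ⟨single p 1, single_mem_conicA n hp⟩ := by
    ext1
    simp only [Submodule.coe_smul, Subalgebra.smul_def, smul_eq_mul, single_mul_single, one_mul]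
    rw [add_comm]
    exact congrArg (single · 1) (sub_eq_sub_iff_add_eq_add.1 hus)
  have key := congrArg Subtype.val (congrArg φ hsmul)
  simp only [map_smul, Submodule.coe_smul, Subalgebra.smul_def, smul_eq_mul] at key
  calc _ = single (-s) 1 * (single s 1 *
        (φ ⟨single q 1, single_mem_conicA n hq⟩ : AddMonoidAlgebra k (Fin d → ℤ))) := by
        rw [← mul_assoc, single_mul_single, neg_add_cancel, one_mul, ← one_def, one_mul]
    _ = _ := by
        rw [key, ← mul_assoc, single_mul_single, one_mul, hus, neg_add_eq_sub]

theorem divToLinearMap_conicA_surjective (v w : Fin d → ℝ) :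
    Function.Surjective
      (Submodule.divToLinearMap (conicA k d t n w) (conicA k d t n v)) := by
  intro φ
  obtain ⟨p, hp⟩ := latticePts_nonempty hx₀ v
  set f := (φ ⟨single p 1, single_mem_conicA n hp⟩ : AddMonoidAlgebra k (Fin d → ℤ)) *
    single (-p) 1 with hf
  have hφ : ∀ a : conicA k d t n v, (φ a : AddMonoidAlgebra k (Fin d → ℤ)) = f * a := by
    suffices (conicA k d t n w).subtype ∘ₗ φ =
        LinearMap.mulLeft (toricR k d t n) f ∘ₗ (conicA k d t n v).subtype from
      fun a => LinearMap.congr_fun this a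
    refine LinearMap.ext_on Submodule.span_span_coe_preimage ?_
    rintro ⟨_, ha⟩ ⟨q, hq, rfl⟩
    simp only [LinearMap.comp_apply, Submodule.subtype_apply, LinearMap.mulLeft_apply]
    rw [coe_apply_single_eq_single_mul hx₀ φ hp hq, mul_comm, hf, mul_assoc, single_mul_single,
      one_mul, neg_add_eq_sub]
  exact ⟨⟨f, Submodule.mem_div_iff_forall_mul_mem.2 fun a ha => hφ ⟨a, ha⟩ ▸ (φ _).2⟩,
    LinearMap.ext fun a => Subtype.ext (hφ a).symm⟩

end Toric

theorem stmt_1_general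
    (d t : ℕ)
    (n : Fin t → ((Fin d → ℝ) →ₗ[ℝ] ℝ))
    (hne : ∀ i, n i ≠ 0)
    (C : Set (Fin d → ℝ)) (hC : C = {x | ∀ i, 0 ≤ n i x})
    (hfull : (interior C).Nonempty)
    (k : Type) [Field k] :
    ∀ v w : Fin d → ℝ,
      ∃ H : Submodule ↥(toricR k d t n) (AddMonoidAlgebra k (Fin d → ℤ)),
        (H : Set (AddMonoidAlgebra k (Fin d → ℤ))) =
          {f | ∀ a ∈ conicA k d t n v, f * a ∈ conicA k d t n w} ∧
        H = Submodule.span ↥(toricR k d t n)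
          {f | ∃ m : Fin d → ℤ,
            ((fun m' => m + m') '' latticePts n v ⊆ latticePts n w) ∧
            f = AddMonoidAlgebra.single m 1} ∧
        (∃ e : ↥H ≃ₗ[↥(toricR k d t n)]
            (↥(conicA k d t n v) →ₗ[↥(toricR k d t n)] ↥(conicA k d t n w)),
          ∀ (f : ↥H) (a : ↥(conicA k d t n v)),
            ((e f) a : AddMonoidAlgebra k (Fin d → ℤ)) =
              (f : AddMonoidAlgebra k (Fin d → ℤ)) * (a : AddMonoidAlgebra k (Fin d → ℤ))) ∧
        (∀ φ : ↥(conicA k d t n v) →ₗ[↥(toricR k d t n)] ↥(conicA k d t n w),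
          ∃! f : AddMonoidAlgebra k (Fin d → ℤ),
            f ∈ Submodule.span ↥(toricR k d t n)
              {g | ∃ m : Fin d → ℤ,
                ((fun m' => m + m') '' latticePts n v ⊆ latticePts n w) ∧
                g = AddMonoidAlgebra.single m 1} ∧
            ∀ a : ↥(conicA k d t n v),
              (φ a : AddMonoidAlgebra k (Fin d → ℤ)) =
                f * (a : AddMonoidAlgebra k (Fin d → ℤ))) := by
  intro v w
  obtain ⟨x₀, hx₀⟩ := exists_forall_pos_of_interior_nonempty hne (hC ▸ hfull)
  obtain ⟨p, hp⟩ := latticePts_nonempty hx₀ v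
  let e := LinearEquiv.ofBijective _
    ⟨Submodule.divToLinearMap_injective (single_mem_conicA (k := k) n hp)
      (IsRegular.of_ne_zero (by simp)).right,
    divToLinearMap_conicA_surjective hx₀ v w⟩
  have hH := div_conicA_eq_span (k := k) n v w
  refine ⟨_, Set.ext fun _ => Submodule.mem_div_iff_forall_mul_mem, hH, ⟨e, fun _ _ => rfl⟩,
    fun φ => ⟨e.symm φ, ⟨hH ▸ (e.symm φ).2, fun a => ?_⟩, fun g ⟨hg, hφ⟩ => ?_⟩⟩
  · exact congrArg Subtype.val (LinearMap.congr_fun (e.apply_symm_apply φ) a).symm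
  · have hgφ : e ⟨g, hH ▸ hg⟩ = φ := LinearMap.ext fun a => Subtype.ext (hφ a).symm
    exact congrArg Subtype.val (e.eq_symm_apply.2 hgφ)

/-- `H = {f ∈ L : f · A_v ⊆ A_w}` is an `R`-submodule of `L`, equal to
the span of the monomials `x^m` with `m + ((C+v) ∩ ℤ^d) ⊆ C + w`, and `f ↦ (a ↦ f*a)`
is an `R`-module isomorphism `H ≃ Hom_R(A_v, A_w)`; in particular every `R`-linear
map `A_v → A_w` is multiplication by a unique element of this span. -/
theorem stmt_1
    (d t : ℕ) (hd : 1 ≤ d)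
    (n : Fin t → ((Fin d → ℝ) →ₗ[ℝ] ℝ))
    (hne : ∀ i, n i ≠ 0)
    (hint : ∀ i (m : Fin d → ℤ), ∃ z : ℤ, n i (ιZ d m) = z)
    (hprim : ∀ i (z : ℤ), ∃ m : Fin d → ℤ, n i (ιZ d m) = z)
    (C : Set (Fin d → ℝ)) (hC : C = {x | ∀ i, 0 ≤ n i x})
    (hfull : (interior C).Nonempty)
    (hpointed : Submodule.span ℝ (Set.range n) = ⊤)
    (hirr : ∀ i, C ⊂ {x | ∀ j, j ≠ i → 0 ≤ n j x})
    (k : Type) [Field k] :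
    ∀ v w : Fin d → ℝ,
      ∃ H : Submodule ↥(toricR k d t n) (AddMonoidAlgebra k (Fin d → ℤ)),
        (H : Set (AddMonoidAlgebra k (Fin d → ℤ))) =
          {f | ∀ a ∈ conicA k d t n v, f * a ∈ conicA k d t n w} ∧
        H = Submodule.span ↥(toricR k d t n)
          {f | ∃ m : Fin d → ℤ,
            ((fun m' => m + m') '' latticePts n v ⊆ latticePts n w) ∧
            f = AddMonoidAlgebra.single m 1} ∧
        (∃ e : ↥H ≃ₗ[↥(toricR k d t n)]
            (↥(conicA k d t n v) →ₗ[↥(toricR k d t n)] ↥(conicA k d t n w)),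
          ∀ (f : ↥H) (a : ↥(conicA k d t n v)),
            ((e f) a : AddMonoidAlgebra k (Fin d → ℤ)) =
              (f : AddMonoidAlgebra k (Fin d → ℤ)) * (a : AddMonoidAlgebra k (Fin d → ℤ))) ∧
        (∀ φ : ↥(conicA k d t n v) →ₗ[↥(toricR k d t n)] ↥(conicA k d t n w),
          ∃! f : AddMonoidAlgebra k (Fin d → ℤ),
            f ∈ Submodule.span ↥(toricR k d t n)
              {g | ∃ m : Fin d → ℤ,
                ((fun m' => m + m') '' latticePts n v ⊆ latticePts n w) ∧
                g = AddMonoidAlgebra.single m 1} ∧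
            ∀ a : ↥(conicA k d t n v),
              (φ a : AddMonoidAlgebra k (Fin d → ℤ)) =
                f * (a : AddMonoidAlgebra k (Fin d → ℤ))) :=
  stmt_1_general d t n hne C hC hfull k
end
end

section
/- For all v, w ∈ ℝ^d: (C+v) ∩ ℤ^d = (C+w) ∩ ℤ^d if and only if ⌈n_i(v)⌉ = ⌈n_i(w)⌉ for all i = 1,…,t. Consequently, the chamber of constancy of v equals {x ∈ ℝ^d : ⌈n_i(v)⌉ − 1 < n_i(x) ≤ ⌈n_i(v)⌉ for all i = 1,…,t}, and this set is a bounded, locally closed, polyhedral subset of ℝ^d. -/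
open Set

set_option synthInstance.maxHeartbeats 400000
set_option maxHeartbeats 1000000

noncomputable section

/-- The lattice points of the interior of the translated cone `C + v`
(the "open conic" lattice set). -/
def openLatticePts {d t : ℕ} (n : Fin t → ((Fin d → ℝ) →ₗ[ℝ] ℝ)) (v : Fin d → ℝ) :
    Set (Fin d → ℤ) :=
  {m | ∀ i, 0 < n i (ιZ d m - v)}

section aux

variable {d t : ℕ}

/-- Bound on the value of a linear functional at a vector with coordinates in `[-1,1]`. -/
lemma abs_apply_le_of_abs_le_one (f : (Fin d → ℝ) →ₗ[ℝ] ℝ) (g : Fin d → ℝ)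
    (hg : ∀ k, |g k| ≤ 1) :
    |f g| ≤ ∑ k, |f (fun l => if k = l then 1 else 0)| := by
  rw [LinearMap.pi_apply_eq_sum_univ]
  refine (Finset.abs_sum_le_sum_abs _ _).trans (Finset.sum_le_sum fun k _ => ?_)
  rw [smul_eq_mul, abs_mul]
  exact mul_le_of_le_one_left (abs_nonneg _) (hg k)

/-- Given a facet direction `p` (with `n i p = 0` and `n j p > 0` for `j ≠ i`),
there exist lattice points with `n i`-value exactly `c` and all other values
as large as desired. -/
lemma exists_lattice_pt (n : Fin t → ((Fin d → ℝ) →ₗ[ℝ] ℝ))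
    (hint : ∀ i (m : Fin d → ℤ), ∃ z : ℤ, n i (ιZ d m) = z)
    (hprim : ∀ i (z : ℤ), ∃ m : Fin d → ℤ, n i (ιZ d m) = z)
    (i : Fin t) (p : Fin d → ℝ) (hp0 : n i p = 0) (hpj : ∀ j, j ≠ i → 0 < n j p)
    (c M : ℤ) :
    ∃ m : Fin d → ℤ, n i (ιZ d m) = c ∧ ∀ j, j ≠ i → (M : ℝ) ≤ n j (ιZ d m) := by
  obtain ⟨m0, hm0⟩ := hprim i 1
  set S : Fin t → ℝ := fun j => ∑ k, |n j (fun l => if k = l then 1 else 0)| with hS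
  set q : ℝ → (Fin d → ℤ) := fun lam k => ⌊lam * p k⌋ with hq
  have hqest : ∀ (j : Fin t) (lam : ℝ), |n j (ιZ d (q lam)) - lam * n j p| ≤ S j := by
    intro j lam
    have h1 : n j (ιZ d (q lam)) - lam * n j p = n j (ιZ d (q lam) - lam • p) := by
      rw [map_sub, map_smul, smul_eq_mul]
    rw [h1]
    refine abs_apply_le_of_abs_le_one (n j) _ (fun k => ?_)
    have h2 : (ιZ d (q lam) - lam • p) k = (⌊lam * p k⌋ : ℝ) - lam * p k := by
      simp [ιZ, hq]
    rw [h2, abs_sub_comm, abs_of_nonneg (sub_nonneg.2 (Int.floor_le _))]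
    linarith [Int.lt_floor_add_one (lam * p k)]
  have htend : ∀ j : Fin t, ∀ᶠ lam : ℝ in Filter.atTop,
      j ≠ i → (M : ℝ) + S j + ((|c| : ℤ) : ℝ) * |n j (ιZ d m0)|
        + S i * |n j (ιZ d m0)| ≤ lam * n j p := by
    intro j
    by_cases hj : j = i
    · filter_upwards with lam h; exact absurd hj h
    · have ht : Filter.Tendsto (fun lam : ℝ => lam * n j p) Filter.atTop Filter.atTop :=
        Filter.Tendsto.atTop_mul_const (hpj j hj) Filter.tendsto_id
      filter_upwards [ht.eventually_ge_atTop
        ((M : ℝ) + S j + ((|c| : ℤ) : ℝ) * |n j (ιZ d m0)| + S i * |n j (ιZ d m0)|)]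
        with lam h _
      exact h
  obtain ⟨lam, hlam⟩ := (Filter.eventually_all.2 htend).exists
  obtain ⟨e, he⟩ := hint i (q lam)
  have heabs : |(e : ℝ)| ≤ S i := by
    have h := hqest i lam
    rw [hp0, mul_zero, sub_zero, he] at h
    exact h
  refine ⟨q lam + (c - e) • m0, ?_, ?_⟩
  · have hcast : ιZ d (q lam + (c - e) • m0)
        = ιZ d (q lam) + ((c - e : ℤ) : ℝ) • ιZ d m0 := by
      funext k
      simp only [ιZ, Pi.add_apply, Pi.smul_apply, smul_eq_mul]
      push_cast
      ring
    rw [hcast, map_add, map_smul, he, hm0, smul_eq_mul]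
    push_cast
    ring
  · intro j hj
    have hcast : ιZ d (q lam + (c - e) • m0)
        = ιZ d (q lam) + ((c - e : ℤ) : ℝ) • ιZ d m0 := by
      funext k
      simp only [ιZ, Pi.add_apply, Pi.smul_apply, smul_eq_mul]
      push_cast
      ring
    rw [hcast, map_add, map_smul, smul_eq_mul]
    have h1 : lam * n j p - S j ≤ n j (ιZ d (q lam)) := by
      have h := hqest j lam
      rw [abs_le] at h
      linarith [h.1]
    have hce : |((c - e : ℤ) : ℝ)| ≤ ((|c| : ℤ) : ℝ) + S i := by
      push_cast
      calc |(c : ℝ) - (e : ℝ)| ≤ |(c : ℝ)| + |(e : ℝ)| := abs_sub _ _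
        _ ≤ |(c : ℝ)| + S i := by linarith
    have h2 : -(((|c| : ℤ) : ℝ) + S i) * |n j (ιZ d m0)|
        ≤ ((c - e : ℤ) : ℝ) * n j (ιZ d m0) := by
      calc -(((|c| : ℤ) : ℝ) + S i) * |n j (ιZ d m0)|
          ≤ -(|((c - e : ℤ) : ℝ)| * |n j (ιZ d m0)|) := by
            rw [neg_mul]
            exact neg_le_neg (mul_le_mul_of_nonneg_right hce (abs_nonneg _))
        _ = -|((c - e : ℤ) : ℝ) * n j (ιZ d m0)| := by rw [abs_mul]
        _ ≤ _ := neg_abs_le _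
    have h3 := hlam j hj
    linarith

/-- Interior points of the cone satisfy all inequalities strictly. -/
lemma interior_pos_aux {n : Fin t → ((Fin d → ℝ) →ₗ[ℝ] ℝ)} {C : Set (Fin d → ℝ)}
    (hC : C = {x | ∀ i, 0 ≤ n i x}) (hne : ∀ i, n i ≠ 0)
    {u : Fin d → ℝ} (hu : u ∈ interior C) (j : Fin t) : 0 < n j u := by
  obtain ⟨z0, hz0⟩ := DFunLike.ne_iff.1 (hne j)
  obtain ⟨z, hz⟩ : ∃ z, n j z < 0 := by
    rcases lt_or_gt_of_ne hz0 with h | h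
    · exact ⟨z0, by simpa using h⟩
    · refine ⟨-z0, ?_⟩
      rw [map_neg]
      simpa using h
  have hcont : Continuous (fun s : ℝ => u + s • z) :=
    continuous_const.add (continuous_id.smul continuous_const)
  have h0 : Filter.Tendsto (fun s : ℝ => u + s • z) (nhds 0) (nhds u) := by
    have h := hcont.tendsto 0
    simpa using h
  have h1 : ∀ᶠ s : ℝ in nhds 0, u + s • z ∈ interior C :=
    h0 (isOpen_interior.mem_nhds hu)
  have h2 : ∀ᶠ s : ℝ in nhdsWithin 0 (Ioi 0), u + s • z ∈ interior C :=
    Filter.Eventually.filter_mono nhdsWithin_le_nhds h1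
  have h3 : ∀ᶠ s : ℝ in nhdsWithin 0 (Ioi 0), s ∈ Ioi (0 : ℝ) := self_mem_nhdsWithin
  obtain ⟨s, hsC, hs0⟩ := (h2.and h3).exists
  have hmem : u + s • z ∈ C := interior_subset hsC
  rw [hC] at hmem
  have h4 : (0 : ℝ) ≤ n j u + s * n j z := by
    have := hmem j
    rwa [map_add, map_smul, smul_eq_mul] at this
  have hs : 0 < s := hs0
  nlinarith

end aux

/-- `(C+v) ∩ ℤ^d = (C+w) ∩ ℤ^d` iff `⌈n i v⌉ = ⌈n i w⌉` for all `i`;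
consequently the chamber of constancy of `v` is
`{x | ⌈n i v⌉ - 1 < n i x ≤ ⌈n i v⌉ for all i}`, a bounded locally closed
polyhedral set (the polyhedral description being the displayed one). -/
theorem stmt_4
    (d t : ℕ) (hd : 1 ≤ d)
    (n : Fin t → ((Fin d → ℝ) →ₗ[ℝ] ℝ))
    (hne : ∀ i, n i ≠ 0)
    (hint : ∀ i (m : Fin d → ℤ), ∃ z : ℤ, n i (ιZ d m) = z)
    (hprim : ∀ i (z : ℤ), ∃ m : Fin d → ℤ, n i (ιZ d m) = z)
    (C : Set (Fin d → ℝ)) (hC : C = {x | ∀ i, 0 ≤ n i x})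
    (hfull : (interior C).Nonempty)
    (hpointed : Submodule.span ℝ (Set.range n) = ⊤)
    (hirr : ∀ i, C ⊂ {x | ∀ j, j ≠ i → 0 ≤ n j x}) :
    (∀ v w : Fin d → ℝ,
      latticePts n v = latticePts n w ↔ ∀ i, ⌈n i v⌉ = ⌈n i w⌉) ∧
    (∀ v : Fin d → ℝ,
      {w : Fin d → ℝ | latticePts n w = latticePts n v} =
        {x : Fin d → ℝ | ∀ i, (⌈n i v⌉ : ℝ) - 1 < n i x ∧ n i x ≤ (⌈n i v⌉ : ℝ)} ∧
      IsLocallyClosed {w : Fin d → ℝ | latticePts n w = latticePts n v} ∧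
      Bornology.IsBounded {w : Fin d → ℝ | latticePts n w = latticePts n v}) := by
  classical
  obtain ⟨u, hu⟩ := hfull
  have hupos : ∀ j, 0 < n j u := fun j => interior_pos_aux hC hne hu j
  -- facet points
  have hp : ∀ i : Fin t, ∃ p : Fin d → ℝ, n i p = 0 ∧ ∀ j, j ≠ i → 0 < n j p := by
    intro i
    obtain ⟨y, hyD, hyC⟩ := exists_of_ssubset (hirr i)
    have hyi : n i y < 0 := by
      by_contra h
      push_neg at h
      refine hyC ?_
      rw [hC]
      intro j
      by_cases hj : j = i
      · subst hj; exact h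
      · exact hyD j hj
    refine ⟨y + (-(n i y) / n i u) • u, ?_, ?_⟩
    · rw [map_add, map_smul, smul_eq_mul, div_mul_cancel₀ _ (ne_of_gt (hupos i))]
      ring
    · intro j hj
      rw [map_add, map_smul, smul_eq_mul]
      have h1 : 0 ≤ n j y := hyD j hj
      have h2 : 0 < -(n i y) / n i u := div_pos (by linarith) (hupos i)
      nlinarith [hupos j]
  -- membership characterization
  have hmem : ∀ (v : Fin d → ℝ) (m : Fin d → ℤ) (i : Fin t),
      (0 ≤ n i (ιZ d m - v)) ↔ (⌈n i v⌉ : ℝ) ≤ n i (ιZ d m) := by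
    intro v m i
    obtain ⟨z, hz⟩ := hint i m
    rw [map_sub, sub_nonneg, hz]
    exact ⟨fun h => by exact_mod_cast Int.ceil_le.2 h,
      fun h => le_trans (Int.le_ceil _) (by exact_mod_cast h)⟩
  -- the key monotonicity via lattice points
  have key : ∀ (v w : Fin d → ℝ), latticePts n v = latticePts n w →
      ∀ i : Fin t, ⌈n i w⌉ ≤ ⌈n i v⌉ := by
    intro v w h i
    obtain ⟨p, hp0, hpj⟩ := hp i
    have hne' : (Finset.univ : Finset (Fin t)).Nonempty := ⟨i, Finset.mem_univ i⟩
    set M : ℤ := Finset.univ.sup' hne' (fun j => max ⌈n j v⌉ ⌈n j w⌉) with hM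
    obtain ⟨m, hm1, hm2⟩ := exists_lattice_pt n hint hprim i p hp0 hpj ⌈n i v⌉ M
    have hMj : ∀ j : Fin t, (⌈n j v⌉ ≤ M) ∧ (⌈n j w⌉ ≤ M) := by
      intro j
      constructor
      · exact le_trans (le_max_left _ _)
          (Finset.le_sup' (fun j => max ⌈n j v⌉ ⌈n j w⌉) (Finset.mem_univ j))
      · exact le_trans (le_max_right _ _)
          (Finset.le_sup' (fun j => max ⌈n j v⌉ ⌈n j w⌉) (Finset.mem_univ j))
    have hmv : m ∈ latticePts n v := by
      intro j
      rw [hmem v m j]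
      by_cases hj : j = i
      · subst hj
        rw [hm1]
      · calc ((⌈n j v⌉ : ℤ) : ℝ) ≤ ((M : ℤ) : ℝ) := by exact_mod_cast (hMj j).1
          _ ≤ n j (ιZ d m) := hm2 j hj
    have hmw : m ∈ latticePts n w := h ▸ hmv
    have := (hmem w m i).1 (hmw i)
    rw [hm1] at this
    exact_mod_cast this
  have hiff : ∀ v w : Fin d → ℝ,
      latticePts n v = latticePts n w ↔ ∀ i, ⌈n i v⌉ = ⌈n i w⌉ := by
    intro v w
    constructor
    · intro h i
      exact le_antisymm (key w v h.symm i) (key v w h i)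
    · intro h
      ext m
      constructor
      · intro hm j
        rw [hmem w m j]
        have := (hmem v m j).1 (hm j)
        rwa [h j] at this
      · intro hm j
        rw [hmem v m j]
        have := (hmem w m j).1 (hm j)
        rwa [h j]
  refine ⟨hiff, ?_⟩
  intro v
  have hset : {w : Fin d → ℝ | latticePts n w = latticePts n v} =
      {x : Fin d → ℝ | ∀ i, (⌈n i v⌉ : ℝ) - 1 < n i x ∧ n i x ≤ (⌈n i v⌉ : ℝ)} := by
    ext x
    simp only [mem_setOf_eq, hiff x v]
    exact forall_congr' fun i => Int.ceil_eq_iff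
  refine ⟨hset, ?_, ?_⟩
  · -- locally closed
    rw [hset]
    refine ⟨{x : Fin d → ℝ | ∀ i, (⌈n i v⌉ : ℝ) - 1 < n i x},
      {x : Fin d → ℝ | ∀ i, n i x ≤ (⌈n i v⌉ : ℝ)}, ?_, ?_, ?_⟩
    · have h1 : {x : Fin d → ℝ | ∀ i, (⌈n i v⌉ : ℝ) - 1 < n i x}
          = ⋂ i, (n i) ⁻¹' Ioi ((⌈n i v⌉ : ℝ) - 1) := by
        ext x; simp
      rw [h1]
      exact isOpen_iInter_of_finite fun i =>
        isOpen_Ioi.preimage (n i).continuous_of_finiteDimensional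
    · have h1 : {x : Fin d → ℝ | ∀ i, n i x ≤ (⌈n i v⌉ : ℝ)}
          = ⋂ i, (n i) ⁻¹' Iic ((⌈n i v⌉ : ℝ)) := by
        ext x; simp
      rw [h1]
      exact isClosed_iInter fun i =>
        isClosed_Iic.preimage (n i).continuous_of_finiteDimensional
    · ext x
      simp only [mem_setOf_eq, mem_inter_iff]
      exact forall_and
  · -- bounded
    rw [hset]
    set L : (Fin d → ℝ) →ₗ[ℝ] (Fin t → ℝ) := LinearMap.pi n with hL
    have hker : LinearMap.ker L = ⊥ := by
      rw [LinearMap.ker_eq_bot']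
      intro x hx
      have hall : ∀ f ∈ Submodule.span ℝ (Set.range n), f x = 0 := by
        intro f hf
        induction hf using Submodule.span_induction with
        | mem f hf =>
          obtain ⟨i, rfl⟩ := hf
          have := congrFun hx i
          simpa [hL, LinearMap.pi_apply] using this
        | zero => simp
        | add f g _ _ hf hg => simp [hf, hg]
        | smul a f _ hf => simp [hf]
      funext k
      have := hall (LinearMap.proj k) (by rw [hpointed]; trivial)
      simpa using this
    obtain ⟨K, hK0, hKanti⟩ := L.exists_antilipschitzWith hker
    have hbox : Bornology.IsBounded
        (Set.univ.pi fun i : Fin t => Icc ((⌈n i v⌉ : ℝ) - 1) ((⌈n i v⌉ : ℝ))) :=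
      (isCompact_univ_pi fun i => isCompact_Icc).isBounded
    refine (hKanti.isBounded_preimage hbox).subset ?_
    intro x hx
    intro i _
    simp only [hL, LinearMap.pi_apply]
    exact ⟨(hx i).1.le, (hx i).2⟩
end
end

section
/- For all v, w ∈ ℝ^d, the following are equivalent: (i) for every i = 1,…,t, ⌈n_i(v)⌉ = ⌈n_i(w)⌉ and (n_i(v) ∈ ℤ if and only if n_i(w) ∈ ℤ) — i.e. v and w lie in the same open cell of the decomposition of ℝ^d induced by C; (ii) (C+v) ∩ ℤ^d = (C+w) ∩ ℤ^d and {m ∈ ℤ^d : n_i(m − v) > 0 for all i} = {m ∈ ℤ^d : n_i(m − w) > 0 for all i} — i.e. the conic lattice sets and the open conic lattice sets of v and w coincide. -/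
open Set

set_option synthInstance.maxHeartbeats 400000
set_option maxHeartbeats 1000000

noncomputable section

lemma ιZ_apply (d : ℕ) (m : Fin d → ℤ) (j : Fin d) : ιZ d m j = (m j : ℝ) := rfl

lemma nιZ_sum {d t : ℕ} (n : Fin t → ((Fin d → ℝ) →ₗ[ℝ] ℝ)) (j : Fin t) (m : Fin d → ℤ) :
    n j (ιZ d m) = ∑ k, (m k : ℝ) * n j (fun l => if k = l then 1 else 0) := by
  rw [LinearMap.pi_apply_eq_sum_univ]
  simp [ιZ, smul_eq_mul]

lemma npi_sum {d t : ℕ} (n : Fin t → ((Fin d → ℝ) →ₗ[ℝ] ℝ)) (j : Fin t) (x : Fin d → ℝ) :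
    n j x = ∑ k, x k * n j (fun l => if k = l then 1 else 0) := by
  rw [LinearMap.pi_apply_eq_sum_univ]; simp [smul_eq_mul]

lemma exists_ker_pos {d t : ℕ}
    (n : Fin t → ((Fin d → ℝ) →ₗ[ℝ] ℝ))
    (hne : ∀ i, n i ≠ 0)
    (hint : ∀ i (m : Fin d → ℤ), ∃ z : ℤ, n i (ιZ d m) = z)
    (C : Set (Fin d → ℝ)) (hC : C = {x | ∀ i, 0 ≤ n i x})
    (hfull : (interior C).Nonempty)
    (hirr : ∀ i, C ⊂ {x | ∀ j, j ≠ i → 0 ≤ n j x}) (i : Fin t) :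
    ∃ q : Fin d → ℤ, n i (ιZ d q) = 0 ∧ ∀ j, j ≠ i → 0 < n j (ιZ d q) := by
  classical
  -- integer coefficient matrix
  have hintc : ∀ j k, ∃ z : ℤ, (z : ℝ) = n j (fun l => if k = l then 1 else 0) := by
    intro j k
    obtain ⟨z, hz⟩ := hint j (fun l => if k = l then 1 else 0)
    refine ⟨z, ?_⟩
    rw [← hz]
    congr 1
    funext l
    simp [ιZ]
  choose a ha using hintc
  -- interior point is strictly positive on all normals
  obtain ⟨y, hy⟩ := hfull
  have hyC : ∀ j, 0 ≤ n j y := by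
    have := interior_subset hy
    rw [hC] at this; exact this
  have hypos : ∀ j, 0 < n j y := by
    intro j
    rcases lt_or_eq_of_le (hyC j) with h | h
    · exact h
    exfalso
    obtain ⟨u, hu⟩ : ∃ u, n j u ≠ 0 := by
      by_contra hcon
      push_neg at hcon
      exact hne j (LinearMap.ext hcon)
    set u' : Fin d → ℝ := (n j u)⁻¹ • u with hu'
    have hju' : n j u' = 1 := by
      rw [hu', map_smul, smul_eq_mul, inv_mul_cancel₀ hu]
    have hcont : Continuous (fun s : ℝ => y - s • u') := by fun_prop
    have hmem : (fun s : ℝ => y - s • u') ⁻¹' interior C ∈ nhds (0 : ℝ) := by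
      apply hcont.continuousAt.preimage_mem_nhds
      apply isOpen_interior.mem_nhds
      simpa using hy
    have hev : ∀ᶠ s in nhdsWithin (0:ℝ) (Set.Ioi 0), (y - s • u') ∈ interior C :=
      Filter.Eventually.filter_mono nhdsWithin_le_nhds hmem
    obtain ⟨s, hsmem, hs0⟩ := (hev.and self_mem_nhdsWithin).exists
    have : 0 ≤ n j (y - s • u') := by
      have := interior_subset hsmem
      rw [hC] at this; exact this j
    rw [map_sub, map_smul, hju', ← h, smul_eq_mul, mul_one] at this
    simp at this
    exact absurd this (not_le.mpr hs0)
  -- irredundancy point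
  obtain ⟨x, hxS, hxC⟩ := exists_of_ssubset (hirr i)
  have hxneg : n i x < 0 := by
    rw [hC] at hxC
    simp only [Set.mem_setOf_eq, not_forall] at hxC
    obtain ⟨j, hj⟩ := hxC
    push_neg at hj
    rcases eq_or_ne j i with rfl | hji
    · exact hj
    · exact absurd (hxS j hji) (not_le.mpr hj)
  have hxnn : ∀ j, j ≠ i → 0 ≤ n j x := hxS
  -- the real point p on the hyperplane
  set s : ℝ := n i y / (-(n i x)) with hs
  have hspos : 0 < s := div_pos (hypos i) (by linarith)
  set p : Fin d → ℝ := y + s • x with hp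
  have hpi : n i p = 0 := by
    rw [hp, map_add, map_smul, smul_eq_mul, hs]
    rw [div_neg, neg_mul, div_mul_cancel₀ _ hxneg.ne]
    ring
  have hppos : ∀ j, j ≠ i → 0 < n j p := by
    intro j hj
    rw [hp, map_add, map_smul, smul_eq_mul]
    have : 0 ≤ s * n j x := mul_nonneg hspos.le (hxnn j hj)
    linarith [hypos j]
  -- a nonzero coefficient for n i
  obtain ⟨k₀, hk₀⟩ : ∃ k₀, a i k₀ ≠ 0 := by
    by_contra hcon
    push_neg at hcon
    apply hne i
    apply LinearMap.ext
    intro x'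
    rw [npi_sum n i x']
    simp only [LinearMap.zero_apply]
    apply Finset.sum_eq_zero
    intro k _
    rw [← ha i k, hcon k]
    simp
  set α : ℤ := a i k₀ with hαdef
  have hα1 : (1:ℝ) ≤ |(α:ℝ)| := by
    have := Int.one_le_abs hk₀
    calc (1:ℝ) ≤ ((|α| : ℤ) : ℝ) := by exact_mod_cast this
    _ = |(α:ℝ)| := by push_cast; ring
  set c : Fin t → ℝ := fun j => (1/2) * ∑ k, |(a j k : ℝ)| with hc
  have hcnn : ∀ j, 0 ≤ c j := by
    intro j
    apply mul_nonneg (by norm_num)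
    exact Finset.sum_nonneg (fun k _ => abs_nonneg _)
  set b : ℕ → Fin d → ℤ := fun M k => round ((M:ℝ) * p k) with hb
  set Sm : ℕ → ℤ := fun M => ∑ k, a i k * b M k with hSm
  set mm : ℕ → Fin d → ℤ := fun M k => α * b M k - (if k = k₀ then Sm M else 0) with hmm
  -- approximation bound
  have hB : ∀ j M, |n j (ιZ d (b M)) - (M:ℝ) * n j p| ≤ c j := by
    intro j M
    rw [nιZ_sum n j (b M), npi_sum n j p, Finset.mul_sum, ← Finset.sum_sub_distrib]
    calc |∑ k, ((b M k : ℝ) * n j (fun l => if k = l then 1 else 0)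
            - (M:ℝ) * (p k * n j (fun l => if k = l then 1 else 0)))|
        ≤ ∑ k, |(b M k : ℝ) * n j (fun l => if k = l then 1 else 0)
            - (M:ℝ) * (p k * n j (fun l => if k = l then 1 else 0))| :=
          Finset.abs_sum_le_sum_abs _ _
      _ ≤ ∑ k, (1/2) * |(a j k : ℝ)| := by
          apply Finset.sum_le_sum
          intro k _
          have h1 : (b M k : ℝ) * n j (fun l => if k = l then 1 else 0)
              - (M:ℝ) * (p k * n j (fun l => if k = l then 1 else 0))
              = ((b M k : ℝ) - (M:ℝ) * p k) * n j (fun l => if k = l then 1 else 0) := by ring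
          rw [h1, abs_mul, ← ha j k]
          apply mul_le_mul_of_nonneg_right _ (abs_nonneg _)
          have h2 : |(M:ℝ) * p k - round ((M:ℝ) * p k)| ≤ 1/2 := abs_sub_round _
          rw [abs_sub_comm] at h2
          simpa [hb] using h2
      _ = c j := by simp [hc, Finset.mul_sum]
  have hSmB : ∀ M, ((Sm M : ℝ)) = n i (ιZ d (b M)) := by
    intro M
    rw [nιZ_sum n i (b M), hSm]
    push_cast
    apply Finset.sum_congr rfl
    intro k _
    rw [← ha i k]; ring
  have hSbound : ∀ M, |(Sm M : ℝ)| ≤ c i := by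
    intro M
    rw [hSmB]
    have := hB i M
    rw [hpi, mul_zero, sub_zero] at this
    exact this
  have hvec : ∀ M, ιZ d (mm M)
      = (α:ℝ) • ιZ d (b M) - (Sm M : ℝ) • (fun l => if k₀ = l then (1:ℝ) else 0) := by
    intro M
    funext l
    simp only [ιZ, hmm, Pi.sub_apply, Pi.smul_apply, smul_eq_mul]
    push_cast
    by_cases h : l = k₀
    · subst h; simp
    · rw [if_neg h, if_neg (fun hh : k₀ = l => h hh.symm)]; ring
  have hval : ∀ j M, n j (ιZ d (mm M))
      = (α:ℝ) * n j (ιZ d (b M)) - (Sm M : ℝ) * (a j k₀ : ℝ) := by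
    intro j M
    rw [hvec M, map_sub, map_smul, map_smul, smul_eq_mul, smul_eq_mul, ← ha j k₀]
  -- sign
  set σ : ℤ := if 0 < α then 1 else -1 with hσ
  have hσα : (σ:ℝ) * (α:ℝ) = |(α:ℝ)| := by
    rcases lt_trichotomy α 0 with h | h | h
    · rw [hσ, if_neg (by omega)]
      rw [abs_of_neg (by exact_mod_cast h)]
      push_cast; ring
    · exact absurd h hk₀
    · rw [hσ, if_pos h, abs_of_pos (by exact_mod_cast h)]
      push_cast; ring
  have hσabs : |(σ:ℝ)| = 1 := by
    rcases lt_or_ge 0 α with h | h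
    · rw [hσ, if_pos h]; norm_num
    · rw [hσ, if_neg (by omega)]; norm_num
  set q : ℕ → Fin d → ℤ := fun M k => σ * mm M k with hq
  have hqvec : ∀ M, ιZ d (q M) = (σ:ℝ) • ιZ d (mm M) := by
    intro M; funext l
    simp only [ιZ, hq, Pi.smul_apply, smul_eq_mul]
    push_cast; ring
  have hqval : ∀ j M, n j (ιZ d (q M))
      = |(α:ℝ)| * n j (ιZ d (b M)) - (σ:ℝ) * ((Sm M : ℝ) * (a j k₀ : ℝ)) := by
    intro j M
    rw [hqvec M, map_smul, smul_eq_mul, hval j M, ← hσα]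
    ring
  -- choose M
  set D : Fin t → ℝ := fun j => (c j + c i * |(a j k₀ : ℝ)| + 1) / n j p with hD
  set M : ℕ := ⌈∑ j, max (D j) 0⌉₊ + 1 with hM
  refine ⟨q M, ?_, ?_⟩
  · rw [hqval i M, ← hSmB M]
    have : (a i k₀ : ℝ) = (α : ℝ) := by rw [hαdef]
    rw [this, ← hσα]
    ring
  · intro j hj
    have hMD : D j ≤ (M:ℝ) := by
      calc D j ≤ max (D j) 0 := le_max_left _ _
        _ ≤ ∑ j', max (D j') 0 :=
            Finset.single_le_sum (f := fun j' => max (D j') 0) (fun k _ => le_max_right _ _) (Finset.mem_univ j)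
        _ ≤ (⌈∑ j', max (D j') 0⌉₊ : ℝ) := Nat.le_ceil _
        _ ≤ (M:ℝ) := by rw [hM]; push_cast; linarith
    have hjp := hppos j hj
    have hMp : c j + c i * |(a j k₀ : ℝ)| + 1 ≤ (M:ℝ) * n j p := by
      have := mul_le_mul_of_nonneg_right hMD hjp.le
      rwa [hD, div_mul_cancel₀ _ hjp.ne'] at this
    have hBj := hB j M
    have hSj := hSbound M
    have habs : |(σ:ℝ) * ((Sm M : ℝ) * (a j k₀ : ℝ))| ≤ c i * |(a j k₀ : ℝ)| := by
      rw [abs_mul, abs_mul, hσabs, one_mul]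
      exact mul_le_mul_of_nonneg_right hSj (abs_nonneg _)
    have h1 : (M:ℝ) * n j p - c j ≤ n j (ιZ d (b M)) := by
      have := abs_le.mp hBj
      linarith [this.1]
    have hX0 : (0:ℝ) ≤ (M:ℝ) * n j p - c j := by
      have : (0:ℝ) ≤ c i * |(a j k₀ : ℝ)| := mul_nonneg (hcnn i) (abs_nonneg _)
      linarith
    have h2 : ((M:ℝ) * n j p - c j) ≤ |(α:ℝ)| * n j (ιZ d (b M)) := by
      calc (M:ℝ) * n j p - c j ≤ |(α:ℝ)| * ((M:ℝ) * n j p - c j) :=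
            le_mul_of_one_le_left hX0 hα1
        _ ≤ |(α:ℝ)| * n j (ιZ d (b M)) :=
            mul_le_mul_of_nonneg_left h1 (abs_nonneg _)
    have h3 := abs_le.mp habs
    rw [hqval j M]
    have := h3.2
    nlinarith

lemma exists_cone_pt {d t : ℕ}
    (n : Fin t → ((Fin d → ℝ) →ₗ[ℝ] ℝ))
    (hint : ∀ i (m : Fin d → ℤ), ∃ z : ℤ, n i (ιZ d m) = z)
    (hprim : ∀ i (z : ℤ), ∃ m : Fin d → ℤ, n i (ιZ d m) = z)
    (i : Fin t) (q : Fin d → ℤ)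
    (hq0 : n i (ιZ d q) = 0) (hqpos : ∀ j, j ≠ i → 0 < n j (ιZ d q))
    (v : Fin d → ℝ) (z : ℤ) :
    ∃ m : Fin d → ℤ, n i (ιZ d m) = z ∧ ∀ j, j ≠ i → n j v < n j (ιZ d m) := by
  classical
  obtain ⟨m0, hm0⟩ := hprim i z
  have hq1 : ∀ j, j ≠ i → (1:ℝ) ≤ n j (ιZ d q) := by
    intro j hj
    obtain ⟨z', hz'⟩ := hint j q
    have hp := hqpos j hj
    rw [hz'] at hp ⊢
    have hz1 : (1:ℤ) ≤ z' := by exact_mod_cast hp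
    exact_mod_cast hz1
  set k : ℕ := ⌈∑ j, max (n j v - n j (ιZ d m0)) 0⌉₊ + 1 with hk
  refine ⟨m0 + k • q, ?_, ?_⟩
  · have hvec : ιZ d (m0 + k • q) = ιZ d m0 + (k:ℝ) • ιZ d q := by
      funext l
      have hl : (m0 + k • q) l = m0 l + (k:ℤ) * q l := by
        simp [nsmul_eq_mul]
      simp only [ιZ, hl, Pi.add_apply, Pi.smul_apply, smul_eq_mul]
      push_cast; ring
    rw [hvec, map_add, map_smul, hq0, hm0, smul_eq_mul, mul_zero, add_zero]
  · intro j hj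
    have hvec : ιZ d (m0 + k • q) = ιZ d m0 + (k:ℝ) • ιZ d q := by
      funext l
      have hl : (m0 + k • q) l = m0 l + (k:ℤ) * q l := by
        simp [nsmul_eq_mul]
      simp only [ιZ, hl, Pi.add_apply, Pi.smul_apply, smul_eq_mul]
      push_cast; ring
    rw [hvec, map_add, map_smul, smul_eq_mul]
    have h1 : n j v - n j (ιZ d m0) ≤ max (n j v - n j (ιZ d m0)) 0 := le_max_left _ _
    have h2 : max (n j v - n j (ιZ d m0)) 0 ≤ ∑ j', max (n j' v - n j' (ιZ d m0)) 0 :=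
      Finset.single_le_sum (f := fun j' => max (n j' v - n j' (ιZ d m0)) 0)
        (fun _ _ => le_max_right _ _) (Finset.mem_univ j)
    have h3 : ∑ j', max (n j' v - n j' (ιZ d m0)) 0 ≤ (⌈∑ j', max (n j' v - n j' (ιZ d m0)) 0⌉₊ : ℝ) :=
      Nat.le_ceil _
    have h4 : ((⌈∑ j', max (n j' v - n j' (ιZ d m0)) 0⌉₊ : ℝ)) + 1 ≤ (k:ℝ) := by
      rw [hk]; push_cast; linarith
    have h5 : (k:ℝ) ≤ (k:ℝ) * n j (ιZ d q) :=
      le_mul_of_one_le_right (by positivity) (hq1 j hj)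
    linarith

lemma int_iff_ceil_le_floor (x : ℝ) : (∃ z : ℤ, x = z) ↔ ⌈x⌉ ≤ ⌊x⌋ := by
  constructor
  · rintro ⟨z, rfl⟩; simp
  · intro h
    refine ⟨⌊x⌋, le_antisymm ?_ (Int.floor_le x)⟩
    calc x ≤ (⌈x⌉:ℝ) := Int.le_ceil x
      _ ≤ (⌊x⌋:ℝ) := by exact_mod_cast h

lemma ceil_of_nonint (x : ℝ) (hx : ¬ ∃ z : ℤ, x = z) : ⌈x⌉ = ⌊x⌋ + 1 := by
  have h1 : (⌊x⌋:ℝ) < x :=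
    lt_of_le_of_ne (Int.floor_le x) (fun hh => hx ⟨⌊x⌋, hh.symm⟩)
  have h2 : ⌈x⌉ ≤ ⌊x⌋ + 1 := by
    rw [Int.ceil_le]; push_cast
    linarith [Int.lt_floor_add_one x]
  have h3 : ⌊x⌋ < ⌈x⌉ := by
    have : (⌊x⌋:ℝ) < (⌈x⌉:ℝ) := lt_of_lt_of_le h1 (Int.le_ceil x)
    exact_mod_cast this
  omega

/-- `v` and `w` lie in the same open cell (same ceilings and the same
set of indices where the value is an integer) iff both their conic lattice sets and
their open conic lattice sets coincide. -/
theorem stmt_5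
    (d t : ℕ) (hd : 1 ≤ d)
    (n : Fin t → ((Fin d → ℝ) →ₗ[ℝ] ℝ))
    (hne : ∀ i, n i ≠ 0)
    (hint : ∀ i (m : Fin d → ℤ), ∃ z : ℤ, n i (ιZ d m) = z)
    (hprim : ∀ i (z : ℤ), ∃ m : Fin d → ℤ, n i (ιZ d m) = z)
    (C : Set (Fin d → ℝ)) (hC : C = {x | ∀ i, 0 ≤ n i x})
    (hfull : (interior C).Nonempty)
    (hpointed : Submodule.span ℝ (Set.range n) = ⊤)
    (hirr : ∀ i, C ⊂ {x | ∀ j, j ≠ i → 0 ≤ n j x}) :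
    ∀ v w : Fin d → ℝ,
      (∀ i, ⌈n i v⌉ = ⌈n i w⌉ ∧ ((∃ z : ℤ, n i v = z) ↔ (∃ z : ℤ, n i w = z))) ↔
      (latticePts n v = latticePts n w ∧ openLatticePts n v = openLatticePts n w) := by
  intro v w
  constructor
  · intro h
    have hfl : ∀ i, ⌊n i v⌋ = ⌊n i w⌋ := by
      intro i
      obtain ⟨hcl, hin⟩ := h i
      by_cases hz : ∃ z : ℤ, n i v = z
      · obtain ⟨z, hzv⟩ := hz
        obtain ⟨z', hzw⟩ := hin.mp ⟨z, hzv⟩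
        rw [hzv, hzw, Int.ceil_intCast, Int.ceil_intCast] at hcl
        rw [hzv, hzw, Int.floor_intCast, Int.floor_intCast]
        exact hcl
      · have hz' : ¬ ∃ z : ℤ, n i w = z := fun hh => hz (hin.mpr hh)
        have h1 := ceil_of_nonint _ hz
        have h2 := ceil_of_nonint _ hz'
        omega
    constructor
    · ext m
      simp only [latticePts, Set.mem_setOf_eq]
      apply forall_congr'
      intro i
      obtain ⟨z, hz⟩ := hint i m
      rw [map_sub, map_sub, hz, sub_nonneg, sub_nonneg, ← Int.ceil_le, ← Int.ceil_le, (h i).1]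
    · ext m
      simp only [openLatticePts, Set.mem_setOf_eq]
      apply forall_congr'
      intro i
      obtain ⟨z, hz⟩ := hint i m
      rw [map_sub, map_sub, hz, sub_pos, sub_pos, ← Int.floor_lt, ← Int.floor_lt, hfl i]
  · rintro ⟨hL, hO⟩ i
    obtain ⟨q, hq0, hqpos⟩ := exists_ker_pos n hne hint C hC hfull hirr i
    have key : ∀ v' w' : Fin d → ℝ, latticePts n v' = latticePts n w' →
        ⌈n i w'⌉ ≤ ⌈n i v'⌉ := by
      intro v' w' hE
      obtain ⟨m, hm1, hm2⟩ := exists_cone_pt n hint hprim i q hq0 hqpos v' ⌈n i v'⌉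
      have hmv : m ∈ latticePts n v' := by
        intro j
        rcases eq_or_ne j i with rfl | hj
        · rw [map_sub, hm1, sub_nonneg]; exact Int.le_ceil _
        · rw [map_sub, sub_nonneg]; exact (hm2 j hj).le
      rw [hE] at hmv
      have hh := hmv i
      rw [map_sub, hm1, sub_nonneg] at hh
      exact Int.ceil_le.mpr hh
    have key2 : ∀ v' w' : Fin d → ℝ, openLatticePts n v' = openLatticePts n w' →
        ⌊n i w'⌋ ≤ ⌊n i v'⌋ := by
      intro v' w' hE
      obtain ⟨m, hm1, hm2⟩ := exists_cone_pt n hint hprim i q hq0 hqpos v' (⌊n i v'⌋ + 1)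
      have hmv : m ∈ openLatticePts n v' := by
        intro j
        rcases eq_or_ne j i with rfl | hj
        · rw [map_sub, hm1, sub_pos]; push_cast; exact Int.lt_floor_add_one _
        · rw [map_sub, sub_pos]; exact hm2 j hj
      rw [hE] at hmv
      have hh := hmv i
      rw [map_sub, hm1, sub_pos] at hh
      have : ⌊n i w'⌋ < ⌊n i v'⌋ + 1 := Int.floor_lt.mpr hh
      omega
    have hceil : ⌈n i v⌉ = ⌈n i w⌉ := le_antisymm (key w v hL.symm) (key v w hL)
    have hfloor : ⌊n i v⌋ = ⌊n i w⌋ := le_antisymm (key2 w v hO.symm) (key2 v w hO)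
    exact ⟨hceil, by rw [int_iff_ceil_le_floor, int_iff_ceil_le_floor, hceil, hfloor]⟩
end
end

section
/- There exists a positive integer q₀ such that for every integer q ≥ q₀ and every v ∈ ℝ^d there is a point u ∈ (1/q)ℤ^d with ⌈n_i(u)⌉ = ⌈n_i(v)⌉ for all i = 1,…,t; that is, for q sufficiently large, every chamber of constancy contains a point of the refined lattice (1/q)ℤ^d. -/
open Set

set_option synthInstance.maxHeartbeats 400000
set_option maxHeartbeats 1000000

noncomputable section

/-- A ceiling-vector `c` is feasible if the open chamber region is nonempty. -/
def Feas {d t : ℕ} (n : Fin t → ((Fin d → ℝ) →ₗ[ℝ] ℝ)) (c : Fin t → ℤ) : Prop :=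
  ∃ p : Fin d → ℝ, ∀ i, ((c i : ℝ) - 1 < n i p ∧ n i p < (c i : ℝ))

/-- Uniform bound on `|n i x|` in terms of a sup bound on the coordinates of `x`. -/
lemma abs_apply_le {d t : ℕ} (n : Fin t → ((Fin d → ℝ) →ₗ[ℝ] ℝ)) (i : Fin t)
    (x : Fin d → ℝ) (B : ℝ) (hB : 0 ≤ B) (hx : ∀ j, |x j| ≤ B) :
    |n i x| ≤ B * (∑ i', ∑ j, |n i' fun j' => if j = j' then 1 else 0|) := by
  rw [LinearMap.pi_apply_eq_sum_univ (n i) x]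
  calc |∑ j, x j • n i fun j' => if j = j' then 1 else 0|
      ≤ ∑ j, |x j • n i fun j' => if j = j' then 1 else 0| :=
        Finset.abs_sum_le_sum_abs _ _
    _ ≤ ∑ j, B * |n i fun j' => if j = j' then 1 else 0| := by
        refine Finset.sum_le_sum fun j _ => ?_
        rw [smul_eq_mul, abs_mul]
        exact mul_le_mul_of_nonneg_right (hx j) (abs_nonneg _)
    _ = B * ∑ j, |n i fun j' => if j = j' then 1 else 0| := by rw [Finset.mul_sum]
    _ ≤ B * ∑ i', ∑ j, |n i' fun j' => if j = j' then 1 else 0| := by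
        refine mul_le_mul_of_nonneg_left ?_ hB
        exact Finset.single_le_sum
          (f := fun i' => ∑ j, |n i' fun j' => if j = j' then 1 else 0|)
          (fun i' _ => Finset.sum_nonneg fun j _ => abs_nonneg _) (Finset.mem_univ i)

/-- Points of the interior of the cone satisfy all inequalities strictly. -/
lemma interior_pos {d t : ℕ} (n : Fin t → ((Fin d → ℝ) →ₗ[ℝ] ℝ)) (hne : ∀ i, n i ≠ 0)
    (C : Set (Fin d → ℝ)) (hC : C = {x | ∀ i, 0 ≤ n i x})
    (x₀ : Fin d → ℝ) (hx₀ : x₀ ∈ interior C) (i : Fin t) : 0 < n i x₀ := by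
  obtain ⟨u, hu⟩ : ∃ u, n i u ≠ 0 := by
    by_contra h; push_neg at h
    exact hne i (LinearMap.ext fun u => by simp [h u])
  set y : Fin d → ℝ := (n i u)⁻¹ • u with hy
  have hny : n i y = 1 := by rw [hy, map_smul, smul_eq_mul, inv_mul_cancel₀ hu]
  obtain ⟨ε, hε, hball⟩ := Metric.isOpen_iff.mp isOpen_interior x₀ hx₀
  set r : ℝ := ε / (2 * (‖y‖ + 1)) with hr
  have hr0 : 0 < r := by positivity
  have hmem : x₀ - r • y ∈ C := by
    apply interior_subset
    apply hball
    rw [Metric.mem_ball, dist_eq_norm, sub_sub_cancel_left, norm_neg, norm_smul,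
      Real.norm_eq_abs, abs_of_pos hr0]
    have hy1 : 0 ≤ ‖y‖ := norm_nonneg y
    have : r * ‖y‖ ≤ r * (‖y‖ + 1) := by nlinarith
    have h2 : r * (‖y‖ + 1) = ε / 2 := by
      rw [hr]; field_simp
    linarith
  rw [hC] at hmem
  have h3 := hmem i
  rw [map_sub, map_smul, hny, smul_eq_mul, mul_one] at h3
  linarith

/-- there is `q₀ > 0` such that for all `q ≥ q₀` and all `v`, the chamber
of constancy of `v` contains a point of the refined lattice `(1/q)ℤ^d`. -/
theorem stmt_9
    (d t : ℕ) (hd : 1 ≤ d)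
    (n : Fin t → ((Fin d → ℝ) →ₗ[ℝ] ℝ))
    (hne : ∀ i, n i ≠ 0)
    (hint : ∀ i (m : Fin d → ℤ), ∃ z : ℤ, n i (ιZ d m) = z)
    (hprim : ∀ i (z : ℤ), ∃ m : Fin d → ℤ, n i (ιZ d m) = z)
    (C : Set (Fin d → ℝ)) (hC : C = {x | ∀ i, 0 ≤ n i x})
    (hfull : (interior C).Nonempty)
    (hpointed : Submodule.span ℝ (Set.range n) = ⊤)
    (hirr : ∀ i, C ⊂ {x | ∀ j, j ≠ i → 0 ≤ n j x}) :
    ∃ q₀ : ℕ, 0 < q₀ ∧ ∀ q : ℕ, q₀ ≤ q → ∀ v : Fin d → ℝ,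
      ∃ m : Fin d → ℤ, ∀ i, ⌈n i (fun j => (m j : ℝ) / (q : ℝ))⌉ = ⌈n i v⌉ := by
  classical
  rcases Nat.eq_zero_or_pos t with ht0 | ht0
  · subst ht0
    exact ⟨1, one_pos, fun q _ v => ⟨fun _ => 0, fun i => i.elim0⟩⟩
  have hnt : Nonempty (Fin t) := Fin.pos_iff_nonempty.mp ht0
  have htne : (Finset.univ : Finset (Fin t)).Nonempty := Finset.univ_nonempty
  -- the uniform norm bound
  set N : ℝ := ∑ i', ∑ j, |n i' fun j' => if j = j' then 1 else 0| with hNdef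
  have hN0 : 0 ≤ N :=
    Finset.sum_nonneg fun _ _ => Finset.sum_nonneg fun _ _ => abs_nonneg _
  set B : ℤ := ⌈N⌉ + 1 with hBdef
  have hB1 : (1 : ℤ) ≤ B := by
    have := Int.ceil_nonneg hN0
    omega
  have hNB : N + 1 ≤ (B : ℝ) := by
    rw [hBdef]; push_cast; linarith [Int.le_ceil N]
  set T : Finset (Fin t → ℤ) := Fintype.piFinset fun _ => Finset.Icc (-B) B with hTdef
  have hTne : T.Nonempty := by
    refine ⟨fun _ => 0, ?_⟩
    rw [hTdef, Fintype.mem_piFinset]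
    intro a
    rw [Finset.mem_Icc]
    omega
  -- for each feasible ceiling-vector choose a point with a uniform margin
  have hchoice : ∀ c : Fin t → ℤ, ∃ r : ℝ, 0 < r ∧
      (Feas n c → ∃ p : Fin d → ℝ, ∀ i,
        (c i : ℝ) - 1 + r ≤ n i p ∧ n i p ≤ (c i : ℝ) - r) := by
    intro c
    by_cases h : Feas n c
    · obtain ⟨p, hp⟩ := h
      refine ⟨Finset.univ.inf' htne fun i =>
        min (n i p - ((c i : ℝ) - 1)) ((c i : ℝ) - n i p), ?_, ?_⟩
      · rw [Finset.lt_inf'_iff]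
        intro i _
        simp only [lt_min_iff]
        exact ⟨by linarith [(hp i).1], by linarith [(hp i).2]⟩
      · intro _
        refine ⟨p, fun i => ?_⟩
        have h1 := Finset.inf'_le (s := (Finset.univ : Finset (Fin t)))
          (fun i => min (n i p - ((c i : ℝ) - 1)) ((c i : ℝ) - n i p)) (Finset.mem_univ i)
        have h2 := min_le_left (n i p - ((c i : ℝ) - 1)) ((c i : ℝ) - n i p)
        have h3 := min_le_right (n i p - ((c i : ℝ) - 1)) ((c i : ℝ) - n i p)
        constructor <;> [linarith; linarith]
    · exact ⟨1, one_pos, fun hf => absurd hf h⟩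
  choose r hr0 hrP using hchoice
  set δ : ℝ := T.inf' hTne r with hδdef
  have hδ0 : 0 < δ := by
    rw [hδdef, Finset.lt_inf'_iff]
    intro c _
    exact hr0 c
  -- interior point of the cone
  obtain ⟨x₀, hx₀⟩ := hfull
  have hx0 : ∀ i, 0 < n i x₀ := fun i => interior_pos n hne C hC x₀ hx₀ i
  set Mx : ℝ := Finset.univ.sup' htne fun i => n i x₀ with hMxdef
  have hMx0 : 0 < Mx :=
    lt_of_lt_of_le (hx0 ⟨0, ht0⟩)
      (Finset.le_sup' (fun i => n i x₀) (Finset.mem_univ (⟨0, ht0⟩ : Fin t)))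
  -- the threshold
  refine ⟨⌈(N + 1) / δ⌉₊ + 1, Nat.succ_pos _, ?_⟩
  intro q hq v
  have hq0 : 0 < (q : ℝ) := by
    have : 0 < q := lt_of_lt_of_le (Nat.succ_pos _) hq
    exact_mod_cast this
  have hqδ : N / (q : ℝ) < δ := by
    have h1 : ((⌈(N + 1) / δ⌉₊ + 1 : ℕ) : ℝ) ≤ (q : ℝ) := by exact_mod_cast hq
    have h2 : (N + 1) / δ ≤ (⌈(N + 1) / δ⌉₊ : ℝ) := Nat.le_ceil _
    push_cast at h1
    have h3 : (N + 1) / δ < (q : ℝ) := by linarith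
    have h4 : N + 1 < (q : ℝ) * δ := by
      have := (div_lt_iff₀ hδ0).mp h3
      linarith
    rw [div_lt_iff₀ hq0]
    nlinarith
  -- reduce v to the unit cube
  set k : Fin d → ℤ := fun j => ⌊v j⌋ with hk
  set w : Fin d → ℝ := fun j => Int.fract (v j) with hw
  set c : Fin t → ℤ := fun i => ⌈n i w⌉ with hc
  have hwB : ∀ j, |w j| ≤ 1 := by
    intro j
    rw [hw]
    simp only
    rw [abs_of_nonneg (Int.fract_nonneg _)]
    exact (Int.fract_lt_one _).le
  have hnw : ∀ i, |n i w| ≤ N := by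
    intro i
    have h := abs_apply_le n i w 1 one_pos.le hwB
    rw [one_mul, ← hNdef] at h
    exact h
  have hci : ∀ i, c i = ⌈n i w⌉ := fun i => by rw [hc]
  have hcT : c ∈ T := by
    rw [hTdef, Fintype.mem_piFinset]
    intro i
    rw [Finset.mem_Icc]
    have h1 : n i w ≤ N := (abs_le.mp (hnw i)).2
    have h2 : -N ≤ n i w := (abs_le.mp (hnw i)).1
    have h3 : n i w ≤ (c i : ℝ) := by rw [hci i]; exact Int.le_ceil _
    have h4 : (c i : ℝ) < n i w + 1 := by rw [hci i]; exact Int.ceil_lt_add_one _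
    constructor
    · have : (-B : ℝ) ≤ (c i : ℝ) := by push_cast; linarith
      exact_mod_cast this
    · have : (c i : ℝ) < (B : ℝ) := by linarith
      have := this.le
      exact_mod_cast this
  -- c is feasible: push w slightly into the interior direction
  have hfeas : Feas n c := by
    set ε₀ : ℝ := Finset.univ.inf' htne fun i => n i w - ((c i : ℝ) - 1) with hε₀def
    have hε₀0 : 0 < ε₀ := by
      rw [hε₀def, Finset.lt_inf'_iff]
      intro i _
      have h4 : (c i : ℝ) < n i w + 1 := by rw [hci i]; exact Int.ceil_lt_add_one _
      linarith
    set s : ℝ := ε₀ / (2 * Mx) with hs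
    have hs0 : 0 < s := by positivity
    refine ⟨w - s • x₀, fun i => ?_⟩
    have happ : n i (w - s • x₀) = n i w - s * n i x₀ := by
      rw [map_sub, map_smul, smul_eq_mul]
    have h1 : ε₀ ≤ n i w - ((c i : ℝ) - 1) :=
      Finset.inf'_le (fun i => n i w - ((c i : ℝ) - 1)) (Finset.mem_univ i)
    have h2 : n i x₀ ≤ Mx := Finset.le_sup' (fun i => n i x₀) (Finset.mem_univ i)
    have h3 : s * n i x₀ ≤ s * Mx := mul_le_mul_of_nonneg_left h2 hs0.le
    have h4 : s * Mx = ε₀ / 2 := by rw [hs]; field_simp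
    have h5 : n i w ≤ (c i : ℝ) := by rw [hci i]; exact Int.le_ceil _
    have h6 : 0 < s * n i x₀ := mul_pos hs0 (hx0 i)
    constructor
    · rw [happ]; linarith
    · rw [happ]; linarith
  -- the chosen interior point with margin r c, rounded to the grid
  obtain ⟨p, hp⟩ := hrP c hfeas
  have hδr : δ ≤ r c := by rw [hδdef]; exact Finset.inf'_le r hcT
  refine ⟨fun j => ⌊(q : ℝ) * p j⌋ + (q : ℤ) * k j, fun i => ?_⟩
  obtain ⟨z, hz⟩ := hint i k
  set u₀ : Fin d → ℝ := fun j => ((⌊(q : ℝ) * p j⌋ : ℤ) : ℝ) / q with hu₀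
  have hsplit : (fun j => (((fun j => ⌊(q : ℝ) * p j⌋ + (q : ℤ) * k j) j : ℤ) : ℝ) / (q : ℝ))
      = u₀ + ιZ d k := by
    funext j
    simp only [Pi.add_apply, hu₀, ιZ]
    push_cast
    field_simp
  have h1 : n i (fun j => (((fun j => ⌊(q : ℝ) * p j⌋ + (q : ℤ) * k j) j : ℤ) : ℝ) / (q : ℝ))
      = n i u₀ + (z : ℝ) := by
    rw [hsplit, map_add, hz]
  have hcomp : ∀ j, |u₀ j - p j| ≤ 1 / (q : ℝ) := by
    intro j
    have heq : u₀ j - p j = (((⌊(q : ℝ) * p j⌋ : ℤ) : ℝ) - (q : ℝ) * p j) / q := by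
      rw [hu₀]
      field_simp
    rw [heq, abs_div, abs_of_pos hq0]
    have hf1 := Int.floor_le ((q : ℝ) * p j)
    have hf2 := Int.lt_floor_add_one ((q : ℝ) * p j)
    have habs : |((⌊(q : ℝ) * p j⌋ : ℤ) : ℝ) - (q : ℝ) * p j| ≤ 1 :=
      abs_le.mpr ⟨by linarith, by linarith⟩
    gcongr
  have hb : |n i (u₀ - p)| ≤ (1 / (q : ℝ)) * N := by
    have h := abs_apply_le n i (u₀ - p) (1 / (q : ℝ)) (by positivity)
      (fun j => by simpa using hcomp j)
    rw [← hNdef] at h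
    exact h
  have hb' : |n i u₀ - n i p| < δ := by
    rw [← map_sub]
    calc |n i (u₀ - p)| ≤ (1 / (q : ℝ)) * N := hb
      _ = N / q := by ring
      _ < δ := hqδ
  have hp1 := (hp i).1
  have hp2 := (hp i).2
  have habs := abs_lt.mp hb'
  have hlow : (c i : ℝ) - 1 < n i u₀ := by linarith [habs.1]
  have hhigh : n i u₀ ≤ (c i : ℝ) := by linarith [habs.2]
  have hceil : ⌈n i u₀⌉ = c i := Int.ceil_eq_iff.mpr ⟨hlow, hhigh⟩
  have hv : n i v = n i w + (z : ℝ) := by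
    have hvw : v = w + ιZ d k := by
      funext j
      simp only [Pi.add_apply, hw, hk, ιZ]
      exact (Int.fract_add_floor (v j)).symm
    rw [hvw, map_add, hz]
  calc ⌈n i (fun j => (((fun j => ⌊(q : ℝ) * p j⌋ + (q : ℤ) * k j) j : ℤ) : ℝ) / (q : ℝ))⌉
      = ⌈n i u₀ + (z : ℝ)⌉ := by rw [h1]
    _ = ⌈n i u₀⌉ + z := Int.ceil_add_intCast _ _
    _ = c i + z := by rw [hceil]
    _ = ⌈n i w⌉ + z := by rw [hci i]
    _ = ⌈n i w + (z : ℝ)⌉ := (Int.ceil_add_intCast _ _).symm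
    _ = ⌈n i v⌉ := by rw [hv]
end
end

section
/- For every positive integer q, the R-module R^{1/q} is an internal direct sum of finitely many R-submodules, each of which is isomorphic as an R-module to a conic module A_v for some v ∈ ℝ^d. Moreover, there exists q₀ such that for every integer q ≥ q₀ and every v ∈ ℝ^d, the conic module A_v is isomorphic to a direct summand of the R-module R^{1/q}. -/
open Set

set_option synthInstance.maxHeartbeats 1000000
set_option maxHeartbeats 4000000

universe u

noncomputable section

/-- The embedding of `ℚ^d` into `ℝ^d`. -/
def ιQ (d : ℕ) (u : Fin d → ℚ) : Fin d → ℝ := fun j => (u j : ℝ)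

/-- The toric algebra `R = k[C ∩ ℤ^d]`, realized inside the rational-exponent
Laurent algebra `L_ℚ = AddMonoidAlgebra k (Fin d → ℚ)`: the `k`-subalgebra spanned
(equivalently, generated) by the monomials `x^m` with `m ∈ C ∩ ℤ^d`. -/
def toricRQ (k : Type) [Field k] (d t : ℕ) (n : Fin t → ((Fin d → ℝ) →ₗ[ℝ] ℝ)) :
    Subalgebra k (AddMonoidAlgebra k (Fin d → ℚ)) :=
  Algebra.adjoin k
    {f | ∃ m : Fin d → ℤ, (∀ i, 0 ≤ n i (ιZ d m)) ∧
      f = AddMonoidAlgebra.single (fun j => (m j : ℚ)) 1}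

/-- The conic module `A_v`: the `R`-submodule of `L_ℚ` spanned by the monomials
`x^m` with `m ∈ (C + v) ∩ ℤ^d`. -/
def conicAQ (k : Type) [Field k] (d t : ℕ) (n : Fin t → ((Fin d → ℝ) →ₗ[ℝ] ℝ))
    (v : Fin d → ℝ) :
    Submodule ↥(toricRQ k d t n) (AddMonoidAlgebra k (Fin d → ℚ)) :=
  Submodule.span ↥(toricRQ k d t n)
    {f | ∃ m : Fin d → ℤ, (∀ i, 0 ≤ n i (ιZ d m - v)) ∧
      f = AddMonoidAlgebra.single (fun j => (m j : ℚ)) 1}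

/-- The `R`-module `R^{1/q}`: the `R`-submodule of `L_ℚ` spanned by the monomials
`x^u` with `u ∈ C ∩ (1/q)ℤ^d`. -/
def rootRq (k : Type) [Field k] (d t : ℕ) (n : Fin t → ((Fin d → ℝ) →ₗ[ℝ] ℝ))
    (q : ℕ) :
    Submodule ↥(toricRQ k d t n) (AddMonoidAlgebra k (Fin d → ℚ)) :=
  Submodule.span ↥(toricRQ k d t n)
    {f | ∃ u : Fin d → ℚ, (∀ j, ∃ z : ℤ, u j = (z : ℚ) / (q : ℚ)) ∧
      (∀ i, 0 ≤ n i (ιQ d u)) ∧ f = AddMonoidAlgebra.single u 1}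

/-!
Every `u ∈ (1/q)ℤ^d` is uniquely `a/q + m` with `a ∈ {0, …, q-1}^d` and `m ∈ ℤ^d`, and the
elements of `R` only have integral exponents, so `R^{1/q}` is graded by the fractional class
`a`; the piece of class `a` is `x^{a/q} • A_{-a/q} ≅ A_{-a/q}`.

Conversely, since the `n i` are integral on `ℤ^d`, `A_v` only depends on the ceilings
`⌈n i v⌉`, and `A_{v+m} ≅ A_v` for `m ∈ ℤ^d`. So it suffices to treat `v ∈ [0,1]^d`, where only
finitely many ceiling vectors occur. The cell of each of them has nonempty interior (move a
point of it by a small negative multiple of an interior point of `C`), hence contains a point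
of `(1/q)ℤ^d` for all large `q`, and such a point is `-a/q` up to an integral vector.
-/

open Filter Topology

section

variable {k : Type} [Field k] {d t : ℕ} {n : Fin t → ((Fin d → ℝ) →ₗ[ℝ] ℝ)}

@[simp] lemma ιZ_add (m m' : Fin d → ℤ) : ιZ d (m + m') = ιZ d m + ιZ d m' := by
  funext j; simp [ιZ]

@[simp] lemma ιQ_add (u w : Fin d → ℚ) : ιQ d (u + w) = ιQ d u + ιQ d w := by
  funext j; simp [ιQ]

@[simp] lemma ιQ_intCast (m : Fin d → ℤ) : ιQ d (fun j => (m j : ℚ)) = ιZ d m := by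
  funext j; simp [ιQ, ιZ]

variable (k n) in
def monomialMul (u : Fin d → ℚ) :
    AddMonoidAlgebra k (Fin d → ℚ) ≃ₗ[toricRQ k d t n] AddMonoidAlgebra k (Fin d → ℚ) :=
  Units.mulLeftLinearEquiv _ _ ((AddMonoidAlgebra.of k _).toHomUnits (.ofAdd u))

@[simp] lemma monomialMul_single (u w : Fin d → ℚ) :
    monomialMul k n u (AddMonoidAlgebra.single w 1) = AddMonoidAlgebra.single (u + w) 1 := by
  simp [monomialMul, AddMonoidAlgebra.single_mul_single]

lemma map_monomialMul_conicAQ (u : Fin d → ℚ) (v : Fin d → ℝ) :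
    (conicAQ k d t n v).map (monomialMul k n u).toLinearMap =
      Submodule.span (toricRQ k d t n) {f | ∃ m : Fin d → ℤ, (∀ i, 0 ≤ n i (ιZ d m - v)) ∧
        f = AddMonoidAlgebra.single (u + fun j => (m j : ℚ)) 1} := by
  rw [conicAQ, Submodule.map_span]
  congr 1
  ext g
  constructor
  · rintro ⟨f, ⟨m, hm, rfl⟩, rfl⟩
    exact ⟨m, hm, by simp⟩
  · rintro ⟨m, hm, rfl⟩
    exact ⟨_, ⟨m, hm, rfl⟩, by simp⟩

lemma map_monomialMul_intCast_conicAQ (m₀ : Fin d → ℤ) (v : Fin d → ℝ) :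
    (conicAQ k d t n v).map (monomialMul k n fun j => (m₀ j : ℚ)).toLinearMap =
      conicAQ k d t n (v + ιZ d m₀) := by
  rw [map_monomialMul_conicAQ, conicAQ]
  congr 1
  ext g
  constructor
  · rintro ⟨m, hm, rfl⟩
    refine ⟨m₀ + m, fun i => ?_, by congr 1; funext j; simp⟩
    convert hm i using 2
    simp only [ιZ_add]; abel
  · rintro ⟨m, hm, rfl⟩
    refine ⟨m - m₀, fun i => ?_, by congr 1; funext j; simp⟩
    convert hm i using 2
    funext j; simp [ιZ]; ring

lemma nonempty_conicAQ_equiv_add_intCast (v : Fin d → ℝ) (m₀ : Fin d → ℤ) :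
    Nonempty (conicAQ k d t n v ≃ₗ[toricRQ k d t n] conicAQ k d t n (v + ιZ d m₀)) :=
  ⟨((monomialMul k n _).submoduleMap _).trans
    (LinearEquiv.ofEq _ _ (map_monomialMul_intCast_conicAQ m₀ v))⟩

lemma conicAQ_eq_of_ceil_eq (hint : ∀ i (m : Fin d → ℤ), ∃ z : ℤ, n i (ιZ d m) = z)
    {v w : Fin d → ℝ} (h : ∀ i, ⌈n i v⌉ = ⌈n i w⌉) :
    conicAQ k d t n v = conicAQ k d t n w := by
  have hcone : ∀ (m : Fin d → ℤ) i, 0 ≤ n i (ιZ d m - v) ↔ 0 ≤ n i (ιZ d m - w) := by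
    intro m i
    obtain ⟨z, hz⟩ := hint i m
    rw [map_sub, map_sub, sub_nonneg, sub_nonneg, hz, ← Int.ceil_le, ← Int.ceil_le, h]
  simp only [conicAQ, hcone]

lemma exists_intCast_of_mem_support {r : AddMonoidAlgebra k (Fin d → ℚ)}
    (hr : r ∈ toricRQ k d t n) {u : Fin d → ℚ} (hu : u ∈ r.coeff.support) (j : Fin d) :
    ∃ z : ℤ, u j = z := by
  classical
  induction hr using Algebra.adjoin_induction generalizing u with
  | mem x hx =>
    obtain ⟨m, -, rfl⟩ := hx
    rw [Finset.mem_singleton.1 (Finsupp.support_single_subset hu)]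
    exact ⟨m j, rfl⟩
  | algebraMap c =>
    rw [Finset.mem_singleton.1 (Finsupp.support_single_subset hu)]
    exact ⟨0, by simp⟩
  | add x y _ _ ihx ihy =>
    rw [AddMonoidAlgebra.coeff_add] at hu
    exact (Finset.mem_union.1 (Finsupp.support_add hu)).elim ihx ihy
  | mul x y _ _ ihx ihy =>
    obtain ⟨u₁, h₁, u₂, h₂, rfl⟩ :=
      Finset.mem_add.1 (AddMonoidAlgebra.support_coeff_mul_subset x y hu)
    obtain ⟨z₁, hz₁⟩ := ihx h₁
    obtain ⟨z₂, hz₂⟩ := ihy h₂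
    exact ⟨z₁ + z₂, by simp [hz₁, hz₂]⟩

variable (k n) in
def fractSubmodule (p : Set (Fin d → ℚ)) :
    Submodule (toricRQ k d t n) (AddMonoidAlgebra k (Fin d → ℚ)) where
  carrier := {f | ∀ u ∈ f.coeff.support, (fun j => Int.fract (u j)) ∈ p}
  zero_mem' := by simp
  add_mem' {f g} hf hg u hu := by
    rw [AddMonoidAlgebra.coeff_add] at hu
    exact (Finset.mem_union.1 (Finsupp.support_add hu)).elim (hf u) (hg u)
  smul_mem' r f hf u hu := by
    classical
    obtain ⟨u₁, h₁, u₂, h₂, rfl⟩ :=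
      Finset.mem_add.1 (AddMonoidAlgebra.support_coeff_mul_subset _ f hu)
    convert hf u₂ h₂ using 2 with j
    obtain ⟨z, hz⟩ := exists_intCast_of_mem_support r.2 h₁ j
    rw [Pi.add_apply, hz, Int.fract_intCast_add]

lemma single_mem_fractSubmodule {p : Set (Fin d → ℚ)} {w : Fin d → ℚ}
    (hw : (fun j => Int.fract (w j)) ∈ p) (c : k) :
    AddMonoidAlgebra.single w c ∈ fractSubmodule k n p := by
  intro u hu
  rwa [Finset.mem_singleton.1 (Finsupp.support_single_subset hu)]

lemma fractSubmodule_mono {p p' : Set (Fin d → ℚ)} (h : p ⊆ p') :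
    fractSubmodule k n p ≤ fractSubmodule k n p' :=
  fun _ hf u hu => h (hf u hu)

lemma disjoint_fractSubmodule_compl (p : Set (Fin d → ℚ)) :
    Disjoint (fractSubmodule k n p) (fractSubmodule k n pᶜ) := by
  rw [Submodule.disjoint_def]
  intro f hf hf'
  rw [← AddMonoidAlgebra.coeff_eq_zero, ← Finsupp.support_eq_empty,
    Finset.eq_empty_iff_forall_notMem]
  exact fun u hu => hf' u hu (hf u hu)

def scaledLattice (q : ℕ) : Set (Fin d → ℚ) := {u | ∀ j, ∃ z : ℤ, u j = z / q}

def fracVec (q : ℕ) (a : Fin d → Fin q) : Fin d → ℚ := fun j => (a j : ℚ) / q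

lemma fract_fracVec {q : ℕ} (a : Fin d → Fin q) (j : Fin d) :
    Int.fract (fracVec q a j) = fracVec q a j := by
  have hq : (0 : ℚ) < q := by exact_mod_cast (a j).pos
  rw [Int.fract_eq_self, fracVec, div_lt_one hq]
  exact ⟨by positivity, by exact_mod_cast (a j).2⟩

lemma fracVec_injective {q : ℕ} : Function.Injective (fracVec (d := d) q) := by
  intro a b h
  funext j
  have hq : (q : ℚ) ≠ 0 := by exact_mod_cast (a j).pos.ne'
  have := congrFun h j
  rw [fracVec, fracVec, div_left_inj' hq, Nat.cast_inj] at this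
  exact Fin.ext this

lemma exists_eq_fracVec_add_intCast {q : ℕ} (hq : 0 < q) {u : Fin d → ℚ}
    (hu : u ∈ scaledLattice q) :
    ∃ (a : Fin d → Fin q) (m : Fin d → ℤ), u = fracVec q a + fun j => (m j : ℚ) := by
  choose z hz using hu
  have hq' : (q : ℤ) ≠ 0 := by exact_mod_cast hq.ne'
  refine ⟨fun j => ⟨(z j % q).toNat, by
    have := Int.emod_lt_of_pos (z j) (Int.natCast_pos.2 hq); omega⟩,
    fun j => z j / q, ?_⟩
  funext j
  have hdiv := Int.mul_ediv_add_emod (z j) q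
  have hcast : (((z j % q).toNat : ℕ) : ℚ) = ((z j % q : ℤ) : ℚ) := by
    exact_mod_cast Int.toNat_of_nonneg (Int.emod_nonneg _ hq')
  simp only [hz, Pi.add_apply, fracVec, hcast]
  field_simp
  exact_mod_cast (by linarith : (z j : ℤ) = z j % q + q * (z j / q))

variable (k n) in
def rootComponent (q : ℕ) (a : Fin d → Fin q) :
    Submodule (toricRQ k d t n) (AddMonoidAlgebra k (Fin d → ℚ)) :=
  (conicAQ k d t n (-ιQ d (fracVec q a))).map (monomialMul k n (fracVec q a)).toLinearMap

lemma rootComponent_eq_span {q : ℕ} (a : Fin d → Fin q) :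
    rootComponent k n q a = Submodule.span (toricRQ k d t n)
      {f | ∃ m : Fin d → ℤ, (∀ i, 0 ≤ n i (ιQ d (fracVec q a + fun j => (m j : ℚ)))) ∧
        f = AddMonoidAlgebra.single (fracVec q a + fun j => (m j : ℚ)) 1} := by
  simp only [rootComponent, map_monomialMul_conicAQ, ιQ_add, ιQ_intCast, sub_neg_eq_add, add_comm]

lemma rootComponent_le_rootRq {q : ℕ} (a : Fin d → Fin q) :
    rootComponent k n q a ≤ rootRq k d t n q := by
  rw [rootComponent_eq_span, rootRq]
  refine Submodule.span_mono ?_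
  rintro g ⟨m, hm, rfl⟩
  refine ⟨_, fun j => ⟨a j + q * m j, ?_⟩, hm, rfl⟩
  have hq : (q : ℚ) ≠ 0 := by exact_mod_cast (a j).pos.ne'
  simp only [Pi.add_apply, fracVec]
  push_cast
  field_simp

lemma iSup_rootComponent {q : ℕ} (hq : 0 < q) :
    ⨆ a, rootComponent k n q a = rootRq k d t n q := by
  refine le_antisymm (iSup_le rootComponent_le_rootRq) ?_
  rw [rootRq, Submodule.span_le]
  rintro g ⟨u, hu, hC, rfl⟩
  obtain ⟨a, m, rfl⟩ := exists_eq_fracVec_add_intCast hq hu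
  refine Submodule.mem_iSup_of_mem a ?_
  rw [rootComponent_eq_span]
  exact Submodule.subset_span ⟨m, hC, rfl⟩

lemma rootComponent_le_fractSubmodule {q : ℕ} (a : Fin d → Fin q) :
    rootComponent k n q a ≤ fractSubmodule k n {fracVec q a} := by
  rw [rootComponent_eq_span, Submodule.span_le]
  rintro g ⟨m, -, rfl⟩
  refine single_mem_fractSubmodule ?_ 1
  funext j
  rw [Pi.add_apply, Int.fract_add_intCast, fract_fracVec]

lemma iSupIndep_rootComponent (q : ℕ) : iSupIndep (rootComponent k n q) := by
  intro a
  refine (disjoint_fractSubmodule_compl {fracVec q a}).mono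
    (rootComponent_le_fractSubmodule a) (iSup₂_le fun b hb => ?_)
  refine (rootComponent_le_fractSubmodule b).trans (fractSubmodule_mono ?_)
  rintro _ rfl hba
  exact hb (fracVec_injective hba)

lemma nonempty_rootComponent_equiv_conicAQ {q : ℕ} (a : Fin d → Fin q) :
    Nonempty (rootComponent k n q a ≃ₗ[toricRQ k d t n] conicAQ k d t n (-ιQ d (fracVec q a))) :=
  ⟨((monomialMul k n _).submoduleMap _).symm⟩

lemma exists_iSupIndep_conicAQ_summands {q : ℕ} (hq : 0 < q) :
    ∃ (N : ℕ) (P : Fin N → Submodule (toricRQ k d t n) (AddMonoidAlgebra k (Fin d → ℚ))),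
      (∀ j, P j ≤ rootRq k d t n q) ∧ iSupIndep P ∧ (⨆ j, P j) = rootRq k d t n q ∧
      ∀ j, ∃ v : Fin d → ℝ, Nonempty (P j ≃ₗ[toricRQ k d t n] conicAQ k d t n v) := by
  let e := (finFunctionFinEquiv (m := q) (n := d)).symm
  refine ⟨q ^ d, rootComponent k n q ∘ e, fun j => rootComponent_le_rootRq _,
    (iSupIndep_rootComponent q).comp e.injective, ?_,
    fun j => ⟨_, nonempty_rootComponent_equiv_conicAQ (e j)⟩⟩
  rw [← iSup_rootComponent hq]
  exact e.iSup_comp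

lemma pos_of_mem_interior {E : Type*} [AddCommGroup E] [Module ℝ E] [TopologicalSpace E]
    [IsTopologicalAddGroup E] [ContinuousSMul ℝ E] {f : E →ₗ[ℝ] ℝ} (hf : f ≠ 0) {s : Set E}
    {x : E} (hx : x ∈ interior s) (hs : ∀ x ∈ s, 0 ≤ f x) : 0 < f x := by
  have hopen : IsOpenMap f := f.isOpenMap_of_finiteDimensional (LinearMap.surjective hf)
  have : f x ∈ interior (Ici 0) :=
    interior_mono (image_subset_iff.2 hs) (hopen.image_interior_subset s ⟨x, hx, rfl⟩)
  rwa [interior_Ici] at this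

lemma exists_mem_scaledLattice_dist_le {q : ℕ} (hq : 0 < q) (z : Fin d → ℝ) :
    ∃ w ∈ scaledLattice q, dist (ιQ d w) z ≤ 1 / q := by
  have hq' : (0 : ℝ) < q := by exact_mod_cast hq
  refine ⟨fun j => ⌊q * z j⌋ / q, fun j => ⟨_, rfl⟩, (dist_pi_le_iff (by positivity)).2 fun j => ?_⟩
  have hfloor : (⌊q * z j⌋ : ℝ) / q - z j = -(Int.fract (q * z j) / q) := by
    rw [Int.fract]; field_simp; ring
  rw [Real.dist_eq, ιQ]
  push_cast
  rw [hfloor, abs_neg, abs_of_nonneg (by positivity)]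
  exact div_le_div_of_nonneg_right (Int.fract_lt_one _).le hq'.le

lemma eventually_exists_mem_scaledLattice_mem {U : Set (Fin d → ℝ)} (hU : IsOpen U) {z : Fin d → ℝ}
    (hz : z ∈ U) :
    ∀ᶠ q : ℕ in atTop, ∃ w ∈ scaledLattice q, ιQ d w ∈ U := by
  obtain ⟨r, hr, hball⟩ := Metric.isOpen_iff.1 hU z hz
  filter_upwards [eventually_gt_atTop 0,
    tendsto_one_div_atTop_nhds_zero_nat.eventually (gt_mem_nhds hr)] with q hq hqr
  obtain ⟨w, hw, hdist⟩ := exists_mem_scaledLattice_dist_le hq z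
  exact ⟨w, hw, hball (hdist.trans_lt hqr)⟩

variable (n) in
def openCell (c : Fin t → ℤ) : Set (Fin d → ℝ) := ⋂ i, n i ⁻¹' Ioo ((c i : ℝ) - 1) (c i)

lemma isOpen_openCell (c : Fin t → ℤ) : IsOpen (openCell n c) :=
  isOpen_iInter_of_finite fun i => isOpen_Ioo.preimage (n i).continuous_of_finiteDimensional

lemma ceil_eq_of_mem_openCell {c : Fin t → ℤ} {x : Fin d → ℝ} (hx : x ∈ openCell n c)
    (i : Fin t) : ⌈n i x⌉ = c i :=
  Int.ceil_eq_iff.2 ⟨(mem_iInter.1 hx i).1, (mem_iInter.1 hx i).2.le⟩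

lemma nonempty_openCell_ceil {y₀ : Fin d → ℝ} (hy₀ : ∀ i, 0 < n i y₀) (x : Fin d → ℝ) :
    (openCell n fun i => ⌈n i x⌉).Nonempty := by
  have hsmall : ∀ᶠ s in 𝓝[>] (0 : ℝ), ∀ i, (⌈n i x⌉ : ℝ) - 1 < n i (x - s • y₀) := by
    refine eventually_all.2 fun i => nhdsWithin_le_nhds ?_
    have hcont : Continuous fun s : ℝ => n i (x - s • y₀) := by fun_prop
    refine hcont.continuousAt.eventually (lt_mem_nhds ?_)
    simp only [zero_smul, sub_zero]
    linarith [Int.ceil_lt_add_one (n i x)]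
  obtain ⟨s, hs, hspos⟩ := (hsmall.and self_mem_nhdsWithin).exists
  refine ⟨x - s • y₀, mem_iInter.2 fun i => ⟨hs i, ?_⟩⟩
  rw [map_sub, map_smul, smul_eq_mul]
  linarith [Int.le_ceil (n i x), mul_pos (show 0 < s from hspos) (hy₀ i)]

lemma eventually_exists_mem_scaledLattice_ceil_eq {y₀ : Fin d → ℝ} (hy₀ : ∀ i, 0 < n i y₀)
    (x : Fin d → ℝ) :
    ∀ᶠ q : ℕ in atTop, ∃ w ∈ scaledLattice q, ∀ i, ⌈n i (ιQ d w)⌉ = ⌈n i x⌉ := by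
  obtain ⟨z, hz⟩ := nonempty_openCell_ceil hy₀ x
  filter_upwards [eventually_exists_mem_scaledLattice_mem (isOpen_openCell _) hz]
    with q ⟨w, hw, hwU⟩
  exact ⟨w, hw, ceil_eq_of_mem_openCell hwU⟩

lemma finite_image_ceil_Icc :
    ((fun v i => ⌈n i v⌉) '' Icc (0 : Fin d → ℝ) 1).Finite := by
  have hbdd : ∀ i, BddBelow ((fun v => ⌈n i v⌉) '' Icc (0 : Fin d → ℝ) 1) ∧
      BddAbove ((fun v => ⌈n i v⌉) '' Icc (0 : Fin d → ℝ) 1) := by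
    intro i
    have hcont := (n i).continuous_of_finiteDimensional.continuousOn (s := Icc 0 1)
    rw [← Function.comp_def, image_comp]
    exact ⟨Int.ceil_mono.map_bddBelow (isCompact_Icc.bddBelow_image hcont),
      Int.ceil_mono.map_bddAbove (isCompact_Icc.bddAbove_image hcont)⟩
  refine BddBelow.finite_of_bddAbove (bddBelow_pi.2 fun i => ?_) (bddAbove_pi.2 fun i => ?_)
  · rw [image_image]; exact (hbdd i).1
  · rw [image_image]; exact (hbdd i).2

lemma eventually_forall_Icc_exists_mem_scaledLattice_ceil_eq {y₀ : Fin d → ℝ}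
    (hy₀ : ∀ i, 0 < n i y₀) :
    ∀ᶠ q : ℕ in atTop, ∀ v ∈ Icc (0 : Fin d → ℝ) 1, ∃ w ∈ scaledLattice q,
      ∀ i, ⌈n i (ιQ d w)⌉ = ⌈n i v⌉ := by
  have h : ∀ᶠ q : ℕ in atTop, ∀ c ∈ (fun v i => ⌈n i v⌉) '' Icc (0 : Fin d → ℝ) 1,
      ∃ w ∈ scaledLattice q, ∀ i, ⌈n i (ιQ d w)⌉ = c i := by
    refine (eventually_all_finite finite_image_ceil_Icc).2 ?_
    rintro _ ⟨x, -, rfl⟩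
    exact eventually_exists_mem_scaledLattice_ceil_eq hy₀ x
  filter_upwards [h] with q hq v hv
  exact hq _ ⟨v, hv, rfl⟩

lemma eventually_forall_exists_rootComponent_equiv_conicAQ
    (hint : ∀ i (m : Fin d → ℤ), ∃ z : ℤ, n i (ιZ d m) = z)
    {y₀ : Fin d → ℝ} (hy₀ : ∀ i, 0 < n i y₀) :
    ∀ᶠ q : ℕ in atTop, ∀ v : Fin d → ℝ, ∃ a : Fin d → Fin q,
      Nonempty (rootComponent k n q a ≃ₗ[toricRQ k d t n] conicAQ k d t n v) := by
  filter_upwards [eventually_forall_Icc_exists_mem_scaledLattice_ceil_eq hy₀, eventually_gt_atTop 0]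
    with q hq hq0 v
  set v' : Fin d → ℝ := fun j => Int.fract (v j)
  have hv : v' + ιZ d (fun j => ⌊v j⌋) = v := by funext j; simp [v', ιZ]
  obtain ⟨w, hw, hceil⟩ :=
    hq v' ⟨fun j => Int.fract_nonneg _, fun j => (Int.fract_lt_one _).le⟩
  obtain ⟨a, m, hwa⟩ := exists_eq_fracVec_add_intCast hq0 (u := -w) fun j => by
    obtain ⟨z, hz⟩ := hw j
    exact ⟨-z, by simp [hz, neg_div]⟩
  have hw' : -ιQ d (fracVec q a) + ιZ d (-m) = ιQ d w := by
    rw [← neg_neg w, hwa]; funext j; simp [ιQ, ιZ]; ring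
  obtain ⟨e₁⟩ := nonempty_rootComponent_equiv_conicAQ (k := k) (n := n) a
  obtain ⟨e₂⟩ := nonempty_conicAQ_equiv_add_intCast (k := k) (n := n) (-ιQ d (fracVec q a)) (-m)
  obtain ⟨e₃⟩ := nonempty_conicAQ_equiv_add_intCast (k := k) (n := n) v' fun j => ⌊v j⌋
  rw [hw', conicAQ_eq_of_ceil_eq hint hceil] at e₂
  rw [hv] at e₃
  exact ⟨a, ⟨e₁.trans (e₂.trans e₃)⟩⟩

end

theorem stmt_10_general
    (d t : ℕ)
    (n : Fin t → ((Fin d → ℝ) →ₗ[ℝ] ℝ))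
    (hne : ∀ i, n i ≠ 0)
    (hint : ∀ i (m : Fin d → ℤ), ∃ z : ℤ, n i (ιZ d m) = z)
    (C : Set (Fin d → ℝ)) (hC : C = {x | ∀ i, 0 ≤ n i x})
    (hfull : (interior C).Nonempty)
    (k : Type) [Field k] :
    (∀ q : ℕ, 0 < q →
      ∃ (N : ℕ) (P : Fin N → Submodule ↥(toricRQ k d t n) (AddMonoidAlgebra k (Fin d → ℚ))),
        (∀ j, P j ≤ rootRq k d t n q) ∧
        iSupIndep P ∧
        (⨆ j, P j) = rootRq k d t n q ∧
        (∀ j, ∃ v : Fin d → ℝ,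
          Nonempty (↥(P j) ≃ₗ[↥(toricRQ k d t n)] ↥(conicAQ k d t n v)))) ∧
    (∃ q₀ : ℕ, 0 < q₀ ∧ ∀ q : ℕ, q₀ ≤ q → ∀ v : Fin d → ℝ,
      ∃ P Q : Submodule ↥(toricRQ k d t n) (AddMonoidAlgebra k (Fin d → ℚ)),
        P ≤ rootRq k d t n q ∧ Q ≤ rootRq k d t n q ∧
        P ⊓ Q = ⊥ ∧ P ⊔ Q = rootRq k d t n q ∧
        Nonempty (↥P ≃ₗ[↥(toricRQ k d t n)] ↥(conicAQ k d t n v))) := by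
  refine ⟨fun q hq => exists_iSupIndep_conicAQ_summands hq, ?_⟩
  subst hC
  obtain ⟨y₀, hy₀⟩ := hfull
  have hpos : ∀ i, 0 < n i y₀ := fun i => pos_of_mem_interior (hne i) hy₀ fun _ hx => hx i
  obtain ⟨q₀, hq₀⟩ := eventually_atTop.1 (eventually_forall_exists_rootComponent_equiv_conicAQ
    (k := k) hint hpos)
  refine ⟨q₀ + 1, q₀.succ_pos, fun q hq v => ?_⟩
  obtain ⟨a, e⟩ := hq₀ q (by omega) v
  refine ⟨rootComponent k n q a, ⨆ (b) (_ : b ≠ a), rootComponent k n q b,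
    rootComponent_le_rootRq a, iSup₂_le fun b _ => rootComponent_le_rootRq b,
    disjoint_iff.1 (iSupIndep_rootComponent q a), ?_, e⟩
  rw [← iSup_split_single, iSup_rootComponent (by omega)]

/-- for every `q > 0`, `R^{1/q}` is an internal direct sum of finitely
many `R`-submodules, each isomorphic to a conic module; and for all sufficiently
large `q`, every conic module is isomorphic to a direct summand of `R^{1/q}`. -/
theorem stmt_10
    (d t : ℕ) (hd : 1 ≤ d)
    (n : Fin t → ((Fin d → ℝ) →ₗ[ℝ] ℝ))
    (hne : ∀ i, n i ≠ 0)
    (hint : ∀ i (m : Fin d → ℤ), ∃ z : ℤ, n i (ιZ d m) = z)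
    (hprim : ∀ i (z : ℤ), ∃ m : Fin d → ℤ, n i (ιZ d m) = z)
    (C : Set (Fin d → ℝ)) (hC : C = {x | ∀ i, 0 ≤ n i x})
    (hfull : (interior C).Nonempty)
    (hpointed : Submodule.span ℝ (Set.range n) = ⊤)
    (hirr : ∀ i, C ⊂ {x | ∀ j, j ≠ i → 0 ≤ n j x})
    (k : Type) [Field k] :
    (∀ q : ℕ, 0 < q →
      ∃ (N : ℕ) (P : Fin N → Submodule ↥(toricRQ k d t n) (AddMonoidAlgebra k (Fin d → ℚ))),
        (∀ j, P j ≤ rootRq k d t n q) ∧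
        iSupIndep P ∧
        (⨆ j, P j) = rootRq k d t n q ∧
        (∀ j, ∃ v : Fin d → ℝ,
          Nonempty (↥(P j) ≃ₗ[↥(toricRQ k d t n)] ↥(conicAQ k d t n v)))) ∧
    (∃ q₀ : ℕ, 0 < q₀ ∧ ∀ q : ℕ, q₀ ≤ q → ∀ v : Fin d → ℝ,
      ∃ P Q : Submodule ↥(toricRQ k d t n) (AddMonoidAlgebra k (Fin d → ℚ)),
        P ≤ rootRq k d t n q ∧ Q ≤ rootRq k d t n q ∧
        P ⊓ Q = ⊥ ∧ P ⊔ Q = rootRq k d t n q ∧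
        Nonempty (↥P ≃ₗ[↥(toricRQ k d t n)] ↥(conicAQ k d t n v))) :=
  stmt_10_general d t n hne hint C hC hfull k
end
end

section
/- Assume t = d and that n_1, …, n_d are linearly independent (the toric algebra is simplicial). Then for every v ∈ ℝ^d there is exactly one point x ∈ ℝ^d with n_i(x) ∈ ℤ for all i that lies in the chamber of constancy of v, namely the unique x with n_i(x) = ⌈n_i(v)⌉ for all i = 1,…,d; that is, every chamber of constancy contains a unique 0-cell. -/
open Set
open Matrix

set_option synthInstance.maxHeartbeats 400000
set_option maxHeartbeats 1000000

noncomputable section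

/-- if `t = d` and `n_1, …, n_d` are linearly independent (the
simplicial case), then every chamber of constancy contains a unique point `x` with
`n i x ∈ ℤ` for all `i` (a unique `0`-cell), namely the point with
`n i x = ⌈n i v⌉` for all `i`. -/
theorem stmt_16
    (d : ℕ) (hd : 1 ≤ d)
    (n : Fin d → ((Fin d → ℝ) →ₗ[ℝ] ℝ))
    (hne : ∀ i, n i ≠ 0)
    (hint : ∀ i (m : Fin d → ℤ), ∃ z : ℤ, n i (ιZ d m) = z)
    (hprim : ∀ i (z : ℤ), ∃ m : Fin d → ℤ, n i (ιZ d m) = z)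
    (C : Set (Fin d → ℝ)) (hC : C = {x | ∀ i, 0 ≤ n i x})
    (hfull : (interior C).Nonempty)
    (hpointed : Submodule.span ℝ (Set.range n) = ⊤)
    (hirr : ∀ i, C ⊂ {x | ∀ j, j ≠ i → 0 ≤ n j x})
    (hsimp : LinearIndependent ℝ n) :
    ∀ v : Fin d → ℝ, ∃ x : Fin d → ℝ,
      (∀ i, n i x = (⌈n i v⌉ : ℝ)) ∧
      (∀ i, ∃ z : ℤ, n i x = z) ∧
      latticePts n x = latticePts n v ∧
      ∀ y : Fin d → ℝ,
        ((∀ i, ∃ z : ℤ, n i y = z) ∧ latticePts n y = latticePts n v) → y = x := by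
    classical
  -- the integer matrix of the functionals
  choose A hA using fun i (j : Fin d) => hint i (Pi.single j 1)
  set AZ : Matrix (Fin d) (Fin d) ℤ := Matrix.of A with hAZ
  set Aℝ : Matrix (Fin d) (Fin d) ℝ := AZ.map (Int.cast : ℤ → ℝ)
    with hAR
  have hsingle : ∀ j : Fin d, ιZ d (Pi.single j 1) = (fun k => if j = k then (1:ℝ) else 0) := by
    intro j; funext k
    simp [ιZ, Pi.single_apply, eq_comm]
  have hmulR : ∀ (x : Fin d → ℝ) (i : Fin d), n i x = (Aℝ *ᵥ x) i := by
    intro x i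
    rw [LinearMap.pi_apply_eq_sum_univ (n i) x]
    simp only [Matrix.mulVec, dotProduct]
    refine Finset.sum_congr rfl fun j _ => ?_
    have h1 : n i (fun k => if j = k then (1:ℝ) else 0) = (A i j : ℝ) := by
      rw [← hsingle j]; exact hA i j
    rw [h1, smul_eq_mul, hAR]
    simp [Matrix.map_apply, hAZ, Matrix.of_apply, mul_comm]
  have hmul : ∀ (i : Fin d) (m : Fin d → ℤ), n i (ιZ d m) = ((AZ *ᵥ m) i : ℝ) := by
    intro i m
    rw [hmulR (ιZ d m) i]
    simp only [Matrix.mulVec, dotProduct, hAR, Matrix.map_apply]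
    push_cast [ιZ]
    rfl
  -- the determinant is nonzero
  have hdetR : Aℝ.det ≠ 0 := by
    intro h0
    obtain ⟨cvec, hc0, hcv⟩ := Matrix.exists_vecMul_eq_zero_iff.mpr h0
    have hall : ∀ i, cvec i = 0 := by
      have hzero : ∑ i, cvec i • n i = 0 := by
        apply LinearMap.ext; intro x
        have h2 : (∑ i, cvec i • n i) x = ∑ i, cvec i * n i x := by
          simp [LinearMap.sum_apply, smul_eq_mul]
        rw [h2]
        have h3 : ∑ i, cvec i * n i x = ∑ j, (cvec ᵥ* Aℝ) j * x j := by
          simp only [hmulR, Matrix.mulVec, dotProduct, Matrix.vecMul,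
            Finset.mul_sum, Finset.sum_mul]
          rw [Finset.sum_comm]
          exact Finset.sum_congr rfl fun j _ => Finset.sum_congr rfl fun i _ => by ring
        rw [h3, hcv]
        simp
      exact Fintype.linearIndependent_iff.mp hsimp cvec hzero
    exact hc0 (funext hall)
  have hunit : IsUnit Aℝ := by
    rw [Matrix.isUnit_iff_isUnit_det]
    exact isUnit_iff_ne_zero.mpr hdetR
  have hdetZ : AZ.det ≠ 0 := by
    intro h0
    apply hdetR
    have h := RingHom.map_det (Int.castRingHom ℝ) AZ
    simp only [RingHom.mapMatrix_apply] at h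
    have h2 : Aℝ.det = ((AZ.det : ℤ) : ℝ) := by
      rw [hAR]
      exact h.symm
    rw [h2, h0]
    simp
  have hinj : ∀ a b : Fin d → ℝ, (∀ i, n i a = n i b) → a = b := by
    intro a b h
    have : Aℝ *ᵥ a = Aℝ *ᵥ b := by
      funext i; rw [← hmulR, ← hmulR]; exact h i
    exact Matrix.mulVec_injective_iff_isUnit.mpr hunit this
  have hsurj : ∀ c : Fin d → ℝ, ∃ x, ∀ i, n i x = c i := by
    intro c
    obtain ⟨x, hx⟩ := Matrix.mulVec_surjective_iff_isUnit.mpr hunit c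
    exact ⟨x, fun i => by rw [hmulR, hx]⟩
  -- key comparison lemma
  have key : ∀ (w c : Fin d → ℤ) (x y : Fin d → ℝ),
      (∀ i, n i x = (w i : ℝ)) → (∀ i, n i y = (c i : ℝ)) →
      latticePts n x ⊆ latticePts n y → ∀ i, c i ≤ w i := by
    intro w c x y hx hy hsub i
    obtain ⟨m0, hm0⟩ := hprim i (w i)
    have hm0' : (AZ *ᵥ m0) i = w i := by
      have h := hmul i m0
      rw [h] at hm0
      exact_mod_cast hm0
    set D : ℤ := AZ.det with hD
    set s : ℤ := if 0 < D then 1 else -1 with hs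
    set E : ℤ := s * D with hE
    have hE1 : 1 ≤ E := by
      rcases lt_trichotomy D 0 with h | h | h
      · have hs1 : s = -1 := by rw [hs, if_neg (by omega)]
        rw [hE, hs1]; omega
      · exact absurd h hdetZ
      · have hs1 : s = 1 := by rw [hs, if_pos h]
        rw [hE, hs1]; omega
    set g : Fin d → Fin d → ℤ := fun k j => s * AZ.adjugate j k with hgdef
    have hg : ∀ k, AZ *ᵥ (g k) = fun j => if j = k then E else 0 := by
      intro k; funext j
      have h1 : (AZ * AZ.adjugate) j k = D * (if j = k then 1 else 0) := by
        rw [Matrix.mul_adjugate]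
        simp [Matrix.smul_apply, Matrix.one_apply, hD]
      have h2 : (AZ *ᵥ (g k)) j = s * (AZ * AZ.adjugate) j k := by
        simp only [Matrix.mulVec, dotProduct, Matrix.mul_apply, hgdef,
          Finset.mul_sum]
        exact Finset.sum_congr rfl fun l _ => by ring
      rw [h2, h1, hE]
      by_cases h : j = k <;> simp [h] <;> ring
    set t : Fin d → ℤ := fun k => max 0 (w k - (AZ *ᵥ m0) k) with ht
    set m : Fin d → ℤ := m0 + ∑ k ∈ Finset.univ.erase i, t k • g k with hm
    have hmv : ∀ j, (AZ *ᵥ m) j =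
        (AZ *ᵥ m0) j + ∑ k ∈ Finset.univ.erase i, t k * (if j = k then E else 0) := by
      intro j
      have h4 : AZ *ᵥ m = AZ *ᵥ m0 + ∑ k ∈ Finset.univ.erase i, t k • (AZ *ᵥ (g k)) := by
        simp only [hm, ← Matrix.mulVecLin_apply, map_add, map_sum, _root_.map_smul]
      rw [h4]
      simp only [Pi.add_apply, Finset.sum_apply, Pi.smul_apply, smul_eq_mul]
      congr 1
      exact Finset.sum_congr rfl fun k _ => by rw [hg k]
    have hmvi : (AZ *ᵥ m) i = w i := by
      rw [hmv i, hm0']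
      have : ∑ k ∈ Finset.univ.erase i, t k * (if i = k then E else 0) = 0 := by
        apply Finset.sum_eq_zero
        intro k hk
        have : i ≠ k := fun h => (Finset.mem_erase.mp hk).1 h.symm
        simp [this]
      rw [this]; ring
    have hmvge : ∀ j, w j ≤ (AZ *ᵥ m) j := by
      intro j
      by_cases hji : j = i
      · subst hji; rw [hmvi]
      · rw [hmv j]
        have hsum : ∑ k ∈ Finset.univ.erase i, t k * (if j = k then E else 0)
            = t j * E := by
          rw [Finset.sum_eq_single j]
          · simp
          · intro k _ hkj
            have : j ≠ k := fun h => hkj h.symm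
            simp [this]
          · intro h
            exact absurd (Finset.mem_erase.mpr ⟨hji, Finset.mem_univ j⟩) h
        rw [hsum]
        have h0t : 0 ≤ t j := le_max_left _ _
        have h1t : w j - (AZ *ᵥ m0) j ≤ t j := le_max_right _ _
        have h2t : t j * 1 ≤ t j * E := mul_le_mul_of_nonneg_left hE1 h0t
        linarith
    -- m is in both lattice point sets
    have hmx : m ∈ latticePts n x := by
      intro j
      rw [map_sub, hmul j m, hx j, sub_nonneg]
      exact_mod_cast hmvge j
    have hmy := hsub hmx
    have := hmy i
    rw [map_sub, hmul i m, hy i, sub_nonneg, hmvi] at this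
    exact_mod_cast this
  -- main construction
  intro v
  obtain ⟨x, hx⟩ := hsurj (fun i => (⌈n i v⌉ : ℝ))
  have hEq : latticePts n x = latticePts n v := by
    ext m
    simp only [latticePts, mem_setOf_eq]
    constructor <;> intro h i <;> have hi := h i <;>
      rw [map_sub, hmul i m, sub_nonneg] at hi ⊢
    · rw [hx i] at hi
      have : ⌈n i v⌉ ≤ (AZ *ᵥ m) i := by exact_mod_cast hi
      exact (Int.ceil_le.mp this)
    · rw [hx i]
      have : ⌈n i v⌉ ≤ (AZ *ᵥ m) i := Int.ceil_le.mpr hi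
      exact_mod_cast this
  refine ⟨x, hx, fun i => ⟨⌈n i v⌉, hx i⟩, hEq, ?_⟩
  rintro y ⟨hy, hyL⟩
  choose w hw using hy
  have hyx : latticePts n y = latticePts n x := by rw [hyL, hEq]
  have h1 : ∀ i, (⌈n i v⌉ : ℤ) ≤ w i :=
    key w (fun i => ⌈n i v⌉) y x hw hx (le_of_eq hyx)
  have h2 : ∀ i, w i ≤ ⌈n i v⌉ :=
    key (fun i => ⌈n i v⌉) w x y hx hw (le_of_eq hyx.symm)
  apply hinj
  intro i
  rw [hw i, hx i]
  exact_mod_cast congrArg (fun z : ℤ => (z : ℝ)) (le_antisymm (h2 i) (h1 i))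
end
end
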